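/- arXiv:2109.00970 — 4 statements merged into one kernel-verified Lean document; each statement's English description precedes it below -/
import Mathlib

section
/- Let a_1, a_2 be complex sequences of length M and b_1, b_2 complex sequences of length N. Then for any shift τ ≥ 0, the aperiodic cross-correlation of the Kronecker products satisfies C(a_1 ⊗ b_1, a_2 ⊗ b_2)(τ) = C(a_1,a_2)(⌊τ/N⌋)·C(b_1,b_2)(τ mod N) + Δ_N · C(a_1,a_2)(⌊τ/N⌋+1)·C(b_1,b_2)((τ mod N) − N), where Δ_N = 0 if τ mod N = 0 and Δ_N = 1 otherwise. -/
open Finset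

/-- Aperiodic cross-correlation function (ACCF) of two length-`L` complex sequences
at integer shift `τ`. -/
noncomputable def accf (L : ℕ) (a b : ℕ → ℂ) (τ : ℤ) : ℂ :=
  if 0 ≤ τ ∧ τ < (L : ℤ) then
    ∑ i ∈ range (L - τ.toNat), a i * (starRingEnd ℂ) (b (i + τ.toNat))
  else if -(L : ℤ) < τ ∧ τ ≤ -1 then
    ∑ i ∈ range (L - (-τ).toNat), a (i + (-τ).toNat) * (starRingEnd ℂ) (b i)
  else 0

/-- Kronecker product of sequences: the `(i*N + j)`-th entry of `a ⊗ b` is `a i * b j`,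
where `b` has length `N`. -/
def kron (N : ℕ) (a b : ℕ → ℂ) : ℕ → ℂ := fun i => a (i / N) * b (i % N)

lemma my_sum_range_add (m n : ℕ) (f : ℕ → ℂ) :
    ∑ i ∈ range (m + n), f i = (∑ i ∈ range m, f i) + ∑ j ∈ range n, f (m + j) := by
  rw [← Finset.sum_range_add_sum_Ico f (Nat.le_add_right m n), Finset.sum_Ico_eq_sum_range]
  simp

lemma sum_range_mul_div_mod (N m : ℕ) (hN : 0 < N) (f : ℕ → ℕ → ℂ) :
    ∑ i ∈ range (m * N), f (i / N) (i % N) = ∑ u ∈ range m, ∑ v ∈ range N, f u v := by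
  induction m with
  | zero => simp
  | succ m ih =>
    rw [Nat.succ_mul, my_sum_range_add, ih, Finset.sum_range_succ]
    congr 1
    refine Finset.sum_congr rfl fun j hj => ?_
    rw [mem_range] at hj
    rw [mul_comm m N, Nat.mul_add_div hN, Nat.mul_add_mod, Nat.div_eq_of_lt hj,
      Nat.mod_eq_of_lt hj, Nat.add_zero]

lemma sum_range_split (N r K : ℕ) (hN : 0 < N) (hr : r < N) (hK : 0 < K) (f : ℕ → ℕ → ℂ) :
    ∑ i ∈ range (K * N - r), f (i / N) (i % N) =
      (∑ u ∈ range K, ∑ v ∈ range (N - r), f u v) +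
      ∑ u ∈ range (K - 1), ∑ w ∈ range r, f u (N - r + w) := by
  obtain ⟨K, rfl⟩ := Nat.exists_eq_succ_of_ne_zero hK.ne'
  have h1 : (K + 1) * N - r = K * N + (N - r) := by
    have h0 : (K + 1) * N = K * N + N := by ring
    omega
  rw [h1, my_sum_range_add, sum_range_mul_div_mod N K hN]
  have h2 : ∀ j ∈ range (N - r), f ((K * N + j) / N) ((K * N + j) % N) = f K j := by
    intro j hj
    rw [mem_range] at hj
    have hjN : j < N := by omega
    rw [mul_comm K N, Nat.mul_add_div hN, Nat.mul_add_mod, Nat.div_eq_of_lt hjN,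
      Nat.mod_eq_of_lt hjN, Nat.add_zero]
  rw [Finset.sum_congr rfl h2]
  have h3 : ∀ u, ∑ v ∈ range N, f u v =
      (∑ v ∈ range (N - r), f u v) + ∑ w ∈ range r, f u (N - r + w) := by
    intro u
    have : N = (N - r) + r := by omega
    rw [this, my_sum_range_add]
    simp [← this]
  rw [Finset.sum_congr rfl (fun u _ => h3 u), Finset.sum_add_distrib,
    Finset.sum_range_succ (fun u => ∑ v ∈ range (N - r), f u v), Nat.succ_sub_one]
  ring

lemma accf_natCast (L : ℕ) (a b : ℕ → ℂ) (s : ℕ) :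
    accf L a b (s : ℤ) = ∑ i ∈ range (L - s), a i * (starRingEnd ℂ) (b (i + s)) := by
  unfold accf
  by_cases h : s < L
  · rw [if_pos ⟨Int.natCast_nonneg s, by exact_mod_cast h⟩]
    simp
  · rw [if_neg (by push_cast; omega), if_neg (by push_cast; omega),
      Nat.sub_eq_zero_of_le (le_of_not_gt h)]
    simp

lemma accf_negCast (L : ℕ) (a b : ℕ → ℂ) (r : ℕ) (h1 : 0 < r) (h2 : r < L) :
    accf L a b ((r : ℤ) - L) = ∑ i ∈ range r, a (i + (L - r)) * (starRingEnd ℂ) (b i) := by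
  unfold accf
  rw [if_neg (by push_cast; omega), if_pos ⟨by push_cast; omega, by push_cast; omega⟩]
  have hA : (-((r : ℤ) - L)).toNat = L - r := by omega
  have hB : L - (L - r) = r := by omega
  rw [hA, hB]


/-- Kronecker decomposition of the ACCF at nonnegative shifts. -/
theorem accf_kron (M N : ℕ) (hM : 0 < M) (hN : 0 < N)
    (a1 a2 b1 b2 : ℕ → ℂ) (τ : ℤ) (hτ : 0 ≤ τ) :
    accf (M * N) (kron N a1 b1) (kron N a2 b2) τ =
      accf M a1 a2 (τ / (N : ℤ)) * accf N b1 b2 (τ % (N : ℤ)) +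
      (if τ % (N : ℤ) = 0 then (0 : ℂ) else 1) *
        accf M a1 a2 (τ / (N : ℤ) + 1) * accf N b1 b2 (τ % (N : ℤ) - (N : ℤ)) := by
  obtain ⟨t, rfl⟩ : ∃ t : ℕ, τ = (t : ℤ) := ⟨τ.toNat, (Int.toNat_of_nonneg hτ).symm⟩
  set q := t / N with hq
  set r := t % N with hr
  have hrN : r < N := Nat.mod_lt t hN
  have ht : q * N + r = t := by rw [mul_comm]; exact Nat.div_add_mod t N
  have hdiv : (t : ℤ) / (N : ℤ) = (q : ℤ) := by
    rw [hq]; exact_mod_cast (Int.natCast_ediv t N).symm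
  have hmod : (t : ℤ) % (N : ℤ) = (r : ℤ) := by
    rw [hr]; exact_mod_cast (Int.natCast_emod t N).symm
  rw [hdiv, hmod]
  rw [show (q : ℤ) + 1 = ((q + 1 : ℕ) : ℤ) by push_cast; ring]
  rw [accf_natCast, accf_natCast, accf_natCast, accf_natCast]
  by_cases hlt : t < M * N
  case neg =>
    -- t ≥ M * N, so q ≥ M and everything vanishes
    have hqM : M ≤ q := by
      rw [hq, Nat.le_div_iff_mul_le hN]; omega
    rw [Nat.sub_eq_zero_of_le (le_of_not_gt hlt), Nat.sub_eq_zero_of_le hqM,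
      Nat.sub_eq_zero_of_le (by omega : M ≤ q + 1)]
    simp
  case pos =>
    have hqM : q < M := by
      rw [hq, Nat.div_lt_iff_lt_mul hN]; exact hlt
    set K := M - q with hK
    have hK0 : 0 < K := by omega
    -- rewrite LHS sum into the (i / N, i % N) form
    have hMN : M * N - t = K * N - r := by
      have h0 : M * N = q * N + K * N := by rw [← Nat.add_mul]; congr 1; omega
      omega
    set F : ℕ → ℕ → ℂ := fun u v =>
      a1 u * b1 v * (starRingEnd ℂ) (a2 ((u * N + v + t) / N)) *
        (starRingEnd ℂ) (b2 ((u * N + v + t) % N)) with hF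
    have hstep1 : ∑ i ∈ range (M * N - t), kron N a1 b1 i *
        (starRingEnd ℂ) (kron N a2 b2 (i + t)) =
        ∑ i ∈ range (K * N - r), F (i / N) (i % N) := by
      rw [hMN]
      refine Finset.sum_congr rfl fun i _ => ?_
      have hi : i / N * N + i % N = i := by rw [mul_comm]; exact Nat.div_add_mod i N
      simp only [hF, kron, map_mul, hi]
      ring
    rw [hstep1, sum_range_split N r K hN hrN hK0]
    -- simplify the two double sums
    have hsum1 : ∀ u ∈ range K, ∀ v ∈ range (N - r), F u v =
        (a1 u * (starRingEnd ℂ) (a2 (u + q))) * (b1 v * (starRingEnd ℂ) (b2 (v + r))) := by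
      intro u _ v hv
      rw [mem_range] at hv
      have he : u * N + v + t = N * (u + q) + (v + r) := by rw [← ht]; ring
      have hvr : v + r < N := by omega
      rw [hF]
      simp only [he, Nat.mul_add_div hN, Nat.mul_add_mod, Nat.div_eq_of_lt hvr,
        Nat.mod_eq_of_lt hvr, Nat.add_zero]
      ring
    have hsum2 : ∀ u ∈ range (K - 1), ∀ w ∈ range r, F u (N - r + w) =
        (a1 u * (starRingEnd ℂ) (a2 (u + (q + 1)))) *
          (b1 (N - r + w) * (starRingEnd ℂ) (b2 w)) := by
      intro u _ w hw
      rw [mem_range] at hw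
      have he : u * N + (N - r + w) + t = N * (u + (q + 1)) + w := by
        have hex : N * (u + (q + 1)) = u * N + q * N + N := by ring
        omega
      have hwN : w < N := by omega
      rw [hF]
      simp only [he, Nat.mul_add_div hN, Nat.mul_add_mod, Nat.div_eq_of_lt hwN,
        Nat.mod_eq_of_lt hwN, Nat.add_zero]
      ring
    rw [Finset.sum_congr rfl (fun u hu => Finset.sum_congr rfl (hsum1 u hu)),
      Finset.sum_congr rfl (fun u hu => Finset.sum_congr rfl (hsum2 u hu))]
    rw [← Finset.sum_mul_sum, ← Finset.sum_mul_sum]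
    -- now the RHS
    have hKM : M - q = K := rfl
    have hKM1 : M - (q + 1) = K - 1 := by omega
    rw [hKM1]
    by_cases hr0 : r = 0
    · simp [hr0]
    · rw [if_neg (by exact_mod_cast hr0), one_mul,
        accf_negCast N b1 b2 r (Nat.pos_of_ne_zero hr0) hrN]
      congr 1
      congr 1
      refine Finset.sum_congr rfl fun i _ => ?_
      rw [Nat.add_comm (N - r) i]
end

section
/- Let λ be an even positive integer, m ≥ 1, π a permutation of {1,...,m}, and g_1,...,g_m, e, e' ∈ Z_λ. Define f : Z_2^m → Z_λ by f(x) = (λ/2)·Σ_{β=1}^{m-1} x_{π(β)} x_{π(β+1)} + Σ_{β=1}^m g_β x_β. Set a(x) = f(x) + e and b(x) = f(x) + (λ/2)·x_{π(1)} + e'. Then the complex sequences (ω_λ^{a(i)})_{i=0}^{2^m−1} and (ω_λ^{b(i)})_{i=0}^{2^m−1} (indexing Z_2^m by binary representation) form a Golay complementary pair of length 2^m: the sum of their aperiodic autocorrelations vanishes at every nonzero shift. -/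
open Finset

/-- The `γ`-th binary digit of `i` (so `i = Σ_γ 2^γ · bit i γ`). -/
def bit (i γ : ℕ) : ℕ := i / 2 ^ γ % 2

/-- The complex sequence `ω_λ^{g(·)}` associated to a `ZMod λ`-valued function. -/
noncomputable def seqC (lam : ℕ) (g : ℕ → ZMod lam) : ℕ → ℂ :=
  fun j => Complex.exp (2 * Real.pi * Complex.I * ((g j).val : ℂ) / (lam : ℂ))

namespace GCP


lemma bit_lt_two (i γ : ℕ) : bit i γ < 2 := Nat.mod_lt _ (by norm_num)

/-- flip the `p`-th bit of `i` -/
def flp (p i : ℕ) : ℕ := i % 2 ^ p + 2 ^ p * (1 - bit i p) + 2 ^ (p + 1) * (i / 2 ^ (p + 1))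

lemma decomp (p i : ℕ) : i = i % 2 ^ p + 2 ^ p * bit i p + 2 ^ (p + 1) * (i / 2 ^ (p + 1)) := by
  have h2 := Nat.mod_add_div (i / 2 ^ p) 2
  have h3 : i / 2 ^ p / 2 = i / 2 ^ (p + 1) := by rw [Nat.div_div_eq_div_mul, pow_succ]
  calc i = i % 2 ^ p + 2 ^ p * (i / 2 ^ p) := (Nat.mod_add_div i (2 ^ p)).symm
    _ = i % 2 ^ p + 2 ^ p * (bit i p + 2 * (i / 2 ^ (p + 1))) := by
        rw [← h3]; unfold bit; rw [h2]
    _ = i % 2 ^ p + 2 ^ p * bit i p + 2 ^ (p + 1) * (i / 2 ^ (p + 1)) := by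
        rw [pow_succ]; ring

lemma parts (p i : ℕ) : ∃ L H, L < 2 ^ p ∧ i = L + 2 ^ p * bit i p + 2 ^ (p + 1) * H ∧
    flp p i = L + 2 ^ p * (1 - bit i p) + 2 ^ (p + 1) * H :=
  ⟨i % 2 ^ p, i / 2 ^ (p + 1),
    Nat.mod_lt _ (Nat.pow_pos (by norm_num)), decomp p i, rfl⟩

lemma bit_of_parts (p L c K : ℕ) (hL : L < 2 ^ p) (hc : c < 2) :
    bit (L + 2 ^ p * c + 2 ^ (p + 1) * K) p = c := by
  unfold bit
  have h : L + 2 ^ p * c + 2 ^ (p + 1) * K = L + 2 ^ p * (c + 2 * K) := by rw [pow_succ]; ring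
  rw [h, Nat.add_mul_div_left _ _ (Nat.pow_pos (by norm_num)),
    Nat.div_eq_of_lt hL]
  omega

lemma mod_of_parts (p L c K : ℕ) (hL : L < 2 ^ p) :
    (L + 2 ^ p * c + 2 ^ (p + 1) * K) % 2 ^ p = L := by
  have h : L + 2 ^ p * c + 2 ^ (p + 1) * K = L + 2 ^ p * (c + 2 * K) := by rw [pow_succ]; ring
  rw [h, Nat.add_mul_mod_self_left, Nat.mod_eq_of_lt hL]

lemma div_of_parts (p L c K : ℕ) (hL : L < 2 ^ p) (hc : c < 2) :
    (L + 2 ^ p * c + 2 ^ (p + 1) * K) / 2 ^ (p + 1) = K := by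
  have h : L + 2 ^ p * c + 2 ^ (p + 1) * K = (L + 2 ^ p * c) + 2 ^ (p + 1) * K := by ring
  rw [h, Nat.add_mul_div_left _ _ (Nat.pow_pos (by norm_num)),
    Nat.div_eq_of_lt (by rw [pow_succ]; nlinarith)]
  omega

lemma bit_flp_self (p i : ℕ) : bit (flp p i) p = 1 - bit i p := by
  unfold flp
  exact bit_of_parts p _ _ _ (Nat.mod_lt _ (Nat.pow_pos (by norm_num)))
    (by have := bit_lt_two i p; omega)

lemma bit_mod_pow (q p i : ℕ) (hq : q < p) : bit (i % 2 ^ p) q = bit i q := by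
  unfold bit
  have h1 : i = i % 2 ^ p + 2 ^ q * (2 ^ (p - q) * (i / 2 ^ p)) := by
    rw [← mul_assoc, ← pow_add]
    have : q + (p - q) = p := by omega
    rw [this]
    exact (Nat.mod_add_div i (2 ^ p)).symm
  have h2 : i / 2 ^ q = i % 2 ^ p / 2 ^ q + 2 ^ (p - q) * (i / 2 ^ p) := by
    conv_lhs => rw [h1]
    rw [Nat.add_mul_div_left _ _ (Nat.pow_pos (by norm_num))]
  rw [h2]
  have h3 : 2 ^ (p - q) = 2 * 2 ^ (p - q - 1) := by
    rw [← pow_succ']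
    congr 1
    omega
  rw [h3, mul_assoc, Nat.add_mul_mod_self_left]

lemma bit_div_pow (q p i : ℕ) (hq : p < q) : bit (i / 2 ^ (p + 1)) (q - (p + 1)) = bit i q := by
  unfold bit
  rw [Nat.div_div_eq_div_mul, ← pow_add]
  have h : p + 1 + (q - (p + 1)) = q := by omega
  rw [h]

lemma bit_flp_of_ne (p q i : ℕ) (h : q ≠ p) : bit (flp p i) q = bit i q := by
  obtain ⟨L, H, hL, hi, hf⟩ := parts p i
  have hb := bit_lt_two i p
  rcases Nat.lt_or_ge q p with hq | hq
  · rw [← bit_mod_pow q p (flp p i) hq, ← bit_mod_pow q p i hq]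
    congr 1
    rw [hf, mod_of_parts p L _ H hL]
    conv_rhs => rw [hi]
    rw [mod_of_parts p L _ H hL]
  · have hq' : p < q := by omega
    rw [← bit_div_pow q p (flp p i) hq', ← bit_div_pow q p i hq']
    congr 1
    rw [hf, div_of_parts p L _ H hL (by omega)]
    conv_rhs => rw [hi]
    rw [div_of_parts p L _ H hL (by omega)]

lemma flp_flp (p i : ℕ) : flp p (flp p i) = i := by
  obtain ⟨L, H, hL, hi, hf⟩ := parts p i
  have hb := bit_lt_two i p
  have h1 : bit (flp p i) p = 1 - bit i p := bit_flp_self p i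
  have h2 : flp p i % 2 ^ p = L := by rw [hf]; exact mod_of_parts p L _ H hL
  have h3 : flp p i / 2 ^ (p + 1) = H := by rw [hf]; exact div_of_parts p L _ H hL (by omega)
  have h4 : 1 - (1 - bit i p) = bit i p := by omega
  calc flp p (flp p i)
      = flp p i % 2 ^ p + 2 ^ p * (1 - bit (flp p i) p) + 2 ^ (p + 1) * (flp p i / 2 ^ (p + 1)) := rfl
    _ = L + 2 ^ p * bit i p + 2 ^ (p + 1) * H := by rw [h1, h2, h3, h4]
    _ = i := hi.symm

lemma flp_eq_add (p i : ℕ) (h : bit i p = 0) : flp p i = i + 2 ^ p := by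
  obtain ⟨L, H, hL, hi, hf⟩ := parts p i
  rw [h] at hi hf
  simp only [mul_zero, add_zero, Nat.sub_zero, mul_one] at hi hf
  omega

lemma flp_eq_sub (p i : ℕ) (h : bit i p = 1) : 2 ^ p ≤ i ∧ flp p i = i - 2 ^ p := by
  obtain ⟨L, H, hL, hi, hf⟩ := parts p i
  rw [h] at hi hf
  simp only [mul_zero, add_zero, Nat.sub_self, mul_one] at hi hf
  omega

lemma flp_add (p i t : ℕ) (h : bit i p = bit (i + t) p) : flp p (i + t) = flp p i + t := by
  have hb := bit_lt_two i p
  rcases (by omega : bit i p = 0 ∨ bit i p = 1) with hbv | hbv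
  · rw [flp_eq_add p i hbv, flp_eq_add p (i + t) (by omega)]
    omega
  · obtain ⟨h1, h2⟩ := flp_eq_sub p i hbv
    obtain ⟨h3, h4⟩ := flp_eq_sub p (i + t) (by omega)
    omega

lemma flp_lt (p m i : ℕ) (hp : p < m) (hi : i < 2 ^ m) : flp p i < 2 ^ m := by
  have hb := bit_lt_two i p
  have h2 : 2 ^ (p + 1) * (i / 2 ^ (p + 1) + 1) ≤ 2 ^ m := by
    have hd : i / 2 ^ (p + 1) + 1 ≤ 2 ^ (m - p - 1) := by
      have : i / 2 ^ (p + 1) < 2 ^ (m - p - 1) := by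
        apply Nat.div_lt_of_lt_mul
        rw [← pow_add]
        have he : p + 1 + (m - p - 1) = m := by omega
        rw [he]; exact hi
      omega
    calc 2 ^ (p + 1) * (i / 2 ^ (p + 1) + 1) ≤ 2 ^ (p + 1) * 2 ^ (m - p - 1) :=
          Nat.mul_le_mul_left _ hd
      _ = 2 ^ m := by rw [← pow_add]; congr 1; omega
  have h3 : flp p i < 2 ^ (p + 1) * (i / 2 ^ (p + 1) + 1) := by
    unfold flp
    have hmod : i % 2 ^ p < 2 ^ p := Nat.mod_lt _ (Nat.pow_pos (by norm_num))
    have hc : 2 ^ p * (1 - bit i p) ≤ 2 ^ p := by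
      have h5 : 1 - bit i p ≤ 1 := by omega
      calc 2 ^ p * (1 - bit i p) ≤ 2 ^ p * 1 := Nat.mul_le_mul_left _ h5
        _ = 2 ^ p := by ring
    have hpow : 2 ^ (p + 1) * (i / 2 ^ (p + 1) + 1)
        = 2 ^ (p + 1) * (i / 2 ^ (p + 1)) + 2 ^ p + 2 ^ p := by rw [pow_succ]; ring
    omega
  omega

lemma eq_of_bits (m i j : ℕ) (hi : i < 2 ^ m) (hj : j < 2 ^ m)
    (h : ∀ γ, γ < m → bit i γ = bit j γ) : i = j := by
  apply Nat.eq_of_testBit_eq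
  intro n
  rcases Nat.lt_or_ge n m with hn | hn
  · have hb := h n hn
    simp only [Nat.testBit_eq_decide_div_mod_eq]
    unfold bit at hb
    rw [hb]
  · have h1 : i / 2 ^ n = 0 := Nat.div_eq_of_lt (lt_of_lt_of_le hi (Nat.pow_le_pow_right (by norm_num) hn))
    have h2 : j / 2 ^ n = 0 := Nat.div_eq_of_lt (lt_of_lt_of_le hj (Nat.pow_le_pow_right (by norm_num) hn))
    simp [Nat.testBit_eq_decide_div_mod_eq, h1, h2]



noncomputable def E (lam k : ℕ) : ℂ :=
  Complex.exp (2 * Real.pi * Complex.I * (k : ℂ) / (lam : ℂ))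

noncomputable def chi (lam : ℕ) (c : ZMod lam) : ℂ := E lam c.val

lemma seqC_eq (lam : ℕ) (g : ℕ → ZMod lam) (j : ℕ) : seqC lam g j = chi lam (g j) := rfl

lemma E_add (lam a b : ℕ) : E lam (a + b) = E lam a * E lam b := by
  unfold E
  rw [← Complex.exp_add]
  congr 1
  push_cast
  ring

lemma E_mul_lam (lam : ℕ) (hl : lam ≠ 0) (q : ℕ) : E lam (lam * q) = 1 := by
  unfold E
  have hc : (lam : ℂ) ≠ 0 := Nat.cast_ne_zero.mpr hl
  have h : 2 * (Real.pi : ℂ) * Complex.I * ((lam * q : ℕ) : ℂ) / (lam : ℂ)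
      = (q : ℤ) * (2 * (Real.pi : ℂ) * Complex.I) := by
    push_cast
    field_simp
  rw [h, Complex.exp_int_mul_two_pi_mul_I]

lemma E_mod (lam : ℕ) (hl : lam ≠ 0) (k : ℕ) : E lam (k % lam) = E lam k := by
  conv_rhs => rw [show k = lam * (k / lam) + k % lam from (Nat.div_add_mod k lam).symm]
  rw [E_add, E_mul_lam lam hl, one_mul]

lemma chi_add (lam : ℕ) [NeZero lam] (c d : ZMod lam) :
    chi lam (c + d) = chi lam c * chi lam d := by
  unfold chi
  rw [ZMod.val_add, E_mod lam (NeZero.ne lam), E_add]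

lemma chi_zero (lam : ℕ) [NeZero lam] : chi lam 0 = 1 := by
  unfold chi E
  rw [ZMod.val_zero]
  simp

lemma chi_ne_zero (lam : ℕ) (c : ZMod lam) : chi lam c ≠ 0 := Complex.exp_ne_zero _

lemma chi_mul_conj (lam : ℕ) (c : ZMod lam) :
    chi lam c * (starRingEnd ℂ) (chi lam c) = 1 := by
  unfold chi E
  rw [← Complex.exp_conj, ← Complex.exp_add]
  have h : (starRingEnd ℂ) (2 * Real.pi * Complex.I * (c.val : ℂ) / (lam : ℂ))
      = -(2 * Real.pi * Complex.I * (c.val : ℂ) / (lam : ℂ)) := by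
    simp [map_div₀, map_mul, Complex.conj_I, map_ofNat]
    ring
  rw [h, add_neg_cancel, Complex.exp_zero]

lemma conj_chi (lam : ℕ) [NeZero lam] (c : ZMod lam) :
    (starRingEnd ℂ) (chi lam c) = chi lam (-c) := by
  have h1 : chi lam c * chi lam (-c) = 1 := by
    rw [← chi_add, add_neg_cancel, chi_zero]
  exact mul_left_cancel₀ (chi_ne_zero lam c) (by rw [chi_mul_conj, h1])

lemma chi_sub (lam : ℕ) [NeZero lam] (c d : ZMod lam) :
    chi lam c * (starRingEnd ℂ) (chi lam d) = chi lam (c - d) := by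
  rw [conj_chi, ← chi_add, sub_eq_add_neg]

lemma chi_half (lam : ℕ) (hlam : 0 < lam) (heven : 2 ∣ lam) :
    chi lam ((lam / 2 : ℕ) : ZMod lam) = -1 := by
  unfold chi E
  have hlt : lam / 2 < lam := Nat.div_lt_self hlam one_lt_two
  rw [ZMod.val_natCast, Nat.mod_eq_of_lt hlt]
  have hc : (lam : ℂ) ≠ 0 := Nat.cast_ne_zero.mpr hlam.ne'
  have h2 : ((lam / 2 : ℕ) : ℂ) * 2 = (lam : ℂ) := by
    have hx : lam / 2 * 2 = lam := by omega
    calc ((lam / 2 : ℕ) : ℂ) * 2 = ((lam / 2 * 2 : ℕ) : ℂ) := by push_cast; ring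
      _ = (lam : ℂ) := by rw [hx]
  have h : 2 * (Real.pi : ℂ) * Complex.I * ((lam / 2 : ℕ) : ℂ) / (lam : ℂ)
      = (Real.pi : ℂ) * Complex.I := by
    rw [div_eq_iff hc]
    linear_combination ((Real.pi : ℂ) * Complex.I) * h2
  rw [h, Complex.exp_pi_mul_I]

lemma half_add_half (lam : ℕ) (heven : 2 ∣ lam) :
    ((lam / 2 : ℕ) : ZMod lam) + ((lam / 2 : ℕ) : ZMod lam) = 0 := by
  rw [← Nat.cast_add]
  have h : lam / 2 + lam / 2 = lam := by omega
  rw [h, ZMod.natCast_self]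

lemma chi_shift (lam : ℕ) [NeZero lam] (hlam : 0 < lam) (heven : 2 ∣ lam) (c : ZMod lam) :
    chi lam (c + ((lam / 2 : ℕ) : ZMod lam)) = -chi lam c := by
  rw [chi_add, chi_half lam hlam heven]
  ring


def fq (lam m : ℕ) (π : ℕ → ℕ) (g : ℕ → ZMod lam) (i : ℕ) : ZMod lam :=
  ((lam / 2 : ℕ) : ZMod lam) *
      ∑ β ∈ range (m - 1), (bit i (π β) : ZMod lam) * (bit i (π (β + 1)) : ZMod lam)
    + ∑ β ∈ range m, g β * (bit i β : ZMod lam)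

lemma half_mul_diff (lam : ℕ) (heven : 2 ∣ lam) (a b : ℕ) (ha : a < 2) (hb : b < 2)
    (hne : a ≠ b) :
    ((lam / 2 : ℕ) : ZMod lam) * ((a : ZMod lam) - (b : ZMod lam))
      = ((lam / 2 : ℕ) : ZMod lam) := by
  have hh := half_add_half lam heven
  rcases (by omega : a = 0 ∧ b = 1 ∨ a = 1 ∧ b = 0) with ⟨rfl, rfl⟩ | ⟨rfl, rfl⟩ <;>
    simp only [Nat.cast_zero, Nat.cast_one] <;>
    first
      | ring1
      | linear_combination -hh

lemma half_mul_Q (lam : ℕ) (heven : 2 ∣ lam) (c x y : ℕ) (hc : c < 2) (hx : x < 2) (hy : y < 2)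
    (hxy : x ≠ y) :
    ((lam / 2 : ℕ) : ZMod lam) *
        ((c : ZMod lam) * (x : ZMod lam) - (c : ZMod lam) * (y : ZMod lam)
          - ((1 - (c : ZMod lam)) * (x : ZMod lam) - (1 - (c : ZMod lam)) * (y : ZMod lam)))
      = ((lam / 2 : ℕ) : ZMod lam) := by
  have hh := half_add_half lam heven
  rcases (by omega : c = 0 ∨ c = 1) with rfl | rfl <;>
    rcases (by omega : x = 0 ∧ y = 1 ∨ x = 1 ∧ y = 0) with ⟨rfl, rfl⟩ | ⟨rfl, rfl⟩ <;>
    simp only [Nat.cast_zero, Nat.cast_one] <;>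
    first
      | ring1
      | linear_combination -hh

lemma quad_shift (lam m : ℕ) (heven : 2 ∣ lam) (π : ℕ → ℕ)
    (hinj : Set.InjOn π (Set.Iio m)) (g : ℕ → ZMod lam)
    (v i j : ℕ) (hv1 : 1 ≤ v) (hvm : v < m)
    (hagree : ∀ γ, γ < v → bit i (π γ) = bit j (π γ))
    (hdiff : bit i (π v) ≠ bit j (π v)) :
    fq lam m π g i - fq lam m π g j
      = fq lam m π g (flp (π (v - 1)) i) - fq lam m π g (flp (π (v - 1)) j)
        + ((lam / 2 : ℕ) : ZMod lam) := by
  set p := π (v - 1) with hp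
  have Xne : ∀ (k : ℕ) (γ : ℕ), γ ≠ p → (bit (flp p k) γ : ZMod lam) = (bit k γ : ZMod lam) :=
    fun k γ h => by rw [bit_flp_of_ne p γ k h]
  have Xp : ∀ k : ℕ, (bit (flp p k) p : ZMod lam) = 1 - (bit k p : ZMod lam) := by
    intro k
    rw [bit_flp_self]
    have hb := bit_lt_two k p
    rcases (by omega : bit k p = 0 ∨ bit k p = 1) with h | h <;> rw [h] <;> simp
  have hcp : bit i p = bit j p := hagree (v - 1) (by omega)
  have hcpc : (bit i p : ZMod lam) = (bit j p : ZMod lam) := by rw [hcp]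
  have hpv : π v ≠ p := by
    intro h
    have : v = v - 1 := hinj (by simp [Set.mem_Iio]; omega) (by simp [Set.mem_Iio]; omega) h
    omega
  have hlin : ∑ β ∈ range m, g β * (bit i β : ZMod lam)
        - ∑ β ∈ range m, g β * (bit j β : ZMod lam)
        - (∑ β ∈ range m, g β * (bit (flp p i) β : ZMod lam)
          - ∑ β ∈ range m, g β * (bit (flp p j) β : ZMod lam)) = 0 := by
    rw [← Finset.sum_sub_distrib, ← Finset.sum_sub_distrib, ← Finset.sum_sub_distrib]
    apply Finset.sum_eq_zero
    intro β hβ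
    by_cases hb : β = p
    · subst hb
      rw [Xp i, Xp j, hcpc]
      ring
    · rw [Xne i β hb, Xne j β hb]
      ring
  have hquad : ∑ β ∈ range (m - 1), (bit i (π β) : ZMod lam) * (bit i (π (β + 1)) : ZMod lam)
        - ∑ β ∈ range (m - 1), (bit j (π β) : ZMod lam) * (bit j (π (β + 1)) : ZMod lam)
        - (∑ β ∈ range (m - 1), (bit (flp p i) (π β) : ZMod lam) * (bit (flp p i) (π (β + 1)) : ZMod lam)
          - ∑ β ∈ range (m - 1), (bit (flp p j) (π β) : ZMod lam) * (bit (flp p j) (π (β + 1)) : ZMod lam))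
      = (bit j p : ZMod lam) * (bit i (π v) : ZMod lam)
          - (bit j p : ZMod lam) * (bit j (π v) : ZMod lam)
          - ((1 - (bit j p : ZMod lam)) * (bit i (π v) : ZMod lam)
            - (1 - (bit j p : ZMod lam)) * (bit j (π v) : ZMod lam)) := by
    rw [← Finset.sum_sub_distrib, ← Finset.sum_sub_distrib, ← Finset.sum_sub_distrib]
    have hmem : v - 1 ∈ range (m - 1) := by
      rw [mem_range]; omega
    rw [Finset.sum_eq_single_of_mem (v - 1) hmem ?side]
    case side =>
      intro β hβ hβne
      have hβm : β < m - 1 := mem_range.mp hβ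
      have h1 : π β ≠ p := by
        intro h
        exact hβne (hinj (by simp [Set.mem_Iio]; omega) (by simp [Set.mem_Iio]; omega) h)
      by_cases h2 : π (β + 1) = p
      · have hb2 : β + 1 = v - 1 := hinj (by simp [Set.mem_Iio]; omega) (by simp [Set.mem_Iio]; omega) h2
        have hr : (bit i (π β) : ZMod lam) = (bit j (π β) : ZMod lam) := by
          rw [hagree β (by omega)]
        rw [Xne i _ h1, Xne j _ h1, h2, Xp i, Xp j, hr, hcpc]
        ring
      · rw [Xne i _ h1, Xne j _ h1, Xne i _ h2, Xne j _ h2]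
        ring
    have hv11 : v - 1 + 1 = v := by omega
    rw [hv11, ← hp, Xp i, Xp j, Xne i _ hpv, Xne j _ hpv, hcpc]
  have hQ := half_mul_Q lam heven (bit j p) (bit i (π v)) (bit j (π v))
    (bit_lt_two j p) (bit_lt_two i (π v)) (bit_lt_two j (π v)) hdiff
  simp only [fq]
  linear_combination ((lam / 2 : ℕ) : ZMod lam) * hquad + hlin + hQ

noncomputable def vfun (π : ℕ → ℕ) (t i : ℕ) : ℕ :=
  @dite _ (∃ γ, bit i (π γ) ≠ bit (i + t) (π γ)) (Classical.dec _) (fun h => Nat.find h) (fun _ => 0)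

lemma vfun_spec (π : ℕ → ℕ) (t i : ℕ) (h : ∃ γ, bit i (π γ) ≠ bit (i + t) (π γ)) :
    bit i (π (vfun π t i)) ≠ bit (i + t) (π (vfun π t i)) := by
  unfold vfun
  rw [dif_pos h]
  exact Nat.find_spec h

lemma vfun_min (π : ℕ → ℕ) (t i γ : ℕ) (hγ : γ < vfun π t i) :
    bit i (π γ) = bit (i + t) (π γ) := by
  unfold vfun at hγ
  by_cases h : ∃ γ, bit i (π γ) ≠ bit (i + t) (π γ)
  · rw [dif_pos h] at hγ
    exact not_not.mp (Nat.find_min h hγ)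
  · rw [dif_neg h] at hγ
    omega

lemma vfun_le (π : ℕ → ℕ) (t i γ : ℕ) (hγ : bit i (π γ) ≠ bit (i + t) (π γ)) :
    vfun π t i ≤ γ := by
  have h : ∃ γ, bit i (π γ) ≠ bit (i + t) (π γ) := ⟨γ, hγ⟩
  unfold vfun
  rw [dif_pos h]
  exact Nat.find_min' h hγ

lemma vfun_eq_of (π : ℕ → ℕ) (t i w : ℕ) (h1 : bit i (π w) ≠ bit (i + t) (π w))
    (h2 : ∀ γ, γ < w → bit i (π γ) = bit (i + t) (π γ)) : vfun π t i = w := by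
  have hle := vfun_le π t i w h1
  rcases Nat.lt_or_ge (vfun π t i) w with h | h
  · exact absurd (h2 _ h) (vfun_spec π t i ⟨w, h1⟩)
  · omega

noncomputable def sig (π : ℕ → ℕ) (t i : ℕ) : ℕ :=
  if vfun π t i = 0 then i else flp (π (vfun π t i - 1)) i

lemma main_sum (lam m : ℕ) [NeZero lam] (hlam : 0 < lam) (heven : 2 ∣ lam) (hm : 1 ≤ m)
    (π : ℕ → ℕ) (hπ : Set.BijOn π (Set.Iio m) (Set.Iio m)) (g : ℕ → ZMod lam)
    (e e' : ZMod lam) (t : ℕ) (ht : 0 < t) (ht2 : t < 2 ^ m) :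
    ∑ i ∈ range (2 ^ m - t),
      (chi lam ((fq lam m π g i + e) - (fq lam m π g (i + t) + e))
        + chi lam ((fq lam m π g i + ((lam / 2 : ℕ) : ZMod lam) * (bit i (π 0) : ZMod lam) + e')
            - (fq lam m π g (i + t)
                + ((lam / 2 : ℕ) : ZMod lam) * (bit (i + t) (π 0) : ZMod lam) + e'))) = 0 := by
  -- existence of a differing bit position (via π)
  have hQex : ∀ i, i + t < 2 ^ m → ∃ γ, (bit i (π γ) ≠ bit (i + t) (π γ)) ∧ γ < m := by
    intro i hi
    by_contra hc
    push_neg at hc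
    have hbits : ∀ δ, δ < m → bit i δ = bit (i + t) δ := by
      intro δ hδ
      obtain ⟨γ, hγ, hγe⟩ := hπ.surjOn (Set.mem_Iio.mpr hδ)
      rw [← hγe]
      by_contra hne
      exact absurd (hc γ hne) (by simpa using Set.mem_Iio.mp hγ)
    have : i = i + t := eq_of_bits m i (i + t) (by omega) hi hbits
    omega
  have hEx : ∀ i, i + t < 2 ^ m → ∃ γ, bit i (π γ) ≠ bit (i + t) (π γ) := by
    intro i hi
    obtain ⟨γ, h1, _⟩ := hQex i hi
    exact ⟨γ, h1⟩
  have hVlt : ∀ i, i + t < 2 ^ m → vfun π t i < m := by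
    intro i hi
    obtain ⟨γ, h1, h2⟩ := hQex i hi
    have := vfun_le π t i γ h1
    omega
  -- shared facts in the `v ≠ 0` case
  have hFacts : ∀ i, i + t < 2 ^ m → vfun π t i ≠ 0 →
      flp (π (vfun π t i - 1)) (i + t) = flp (π (vfun π t i - 1)) i + t
        ∧ flp (π (vfun π t i - 1)) i + t < 2 ^ m
        ∧ vfun π t (flp (π (vfun π t i - 1)) i) = vfun π t i := by
    intro i hit hv0
    have hvm := hVlt i hit
    have hsame : bit i (π (vfun π t i - 1)) = bit (i + t) (π (vfun π t i - 1)) :=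
      vfun_min π t i _ (by omega)
    have hadd : flp (π (vfun π t i - 1)) (i + t) = flp (π (vfun π t i - 1)) i + t :=
      flp_add _ _ _ hsame
    have hpm : π (vfun π t i - 1) < m :=
      Set.mem_Iio.mp (hπ.mapsTo (Set.mem_Iio.mpr (show vfun π t i - 1 < m by omega)))
    have hlt : flp (π (vfun π t i - 1)) (i + t) < 2 ^ m := flp_lt _ m _ hpm hit
    refine ⟨hadd, by omega, ?_⟩
    have hpv : π (vfun π t i) ≠ π (vfun π t i - 1) := by
      intro h
      have := hπ.injOn (Set.mem_Iio.mpr hvm) (Set.mem_Iio.mpr (show vfun π t i - 1 < m by omega)) h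
      omega
    apply vfun_eq_of
    · rw [← hadd, bit_flp_of_ne _ _ i hpv, bit_flp_of_ne _ _ (i + t) hpv]
      exact vfun_spec π t i (hEx i hit)
    · intro γ hγ
      rw [← hadd]
      by_cases hpg : π γ = π (vfun π t i - 1)
      · rw [hpg, bit_flp_self, bit_flp_self, hsame]
      · rw [bit_flp_of_ne _ _ i hpg, bit_flp_of_ne _ _ (i + t) hpg]
        exact vfun_min π t i γ (by omega)
  -- vanishing of a single term when v = 0
  have hzero : ∀ i, i + t < 2 ^ m → vfun π t i = 0 →
      chi lam ((fq lam m π g i + e) - (fq lam m π g (i + t) + e))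
        + chi lam ((fq lam m π g i + ((lam / 2 : ℕ) : ZMod lam) * (bit i (π 0) : ZMod lam) + e')
            - (fq lam m π g (i + t)
                + ((lam / 2 : ℕ) : ZMod lam) * (bit (i + t) (π 0) : ZMod lam) + e')) = 0 := by
    intro i hit hv0
    have hd : bit i (π 0) ≠ bit (i + t) (π 0) := by
      have := vfun_spec π t i (hEx i hit)
      rwa [hv0] at this
    have hA : (fq lam m π g i + e) - (fq lam m π g (i + t) + e)
        = fq lam m π g i - fq lam m π g (i + t) := by ring
    have hd' : ((lam / 2 : ℕ) : ZMod lam)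
          * ((bit i (π 0) : ZMod lam) - (bit (i + t) (π 0) : ZMod lam))
        = ((lam / 2 : ℕ) : ZMod lam) :=
      half_mul_diff lam heven _ _ (bit_lt_two i (π 0)) (bit_lt_two (i + t) (π 0)) hd
    have hB : (fq lam m π g i + ((lam / 2 : ℕ) : ZMod lam) * (bit i (π 0) : ZMod lam) + e')
          - (fq lam m π g (i + t)
              + ((lam / 2 : ℕ) : ZMod lam) * (bit (i + t) (π 0) : ZMod lam) + e')
        = (fq lam m π g i - fq lam m π g (i + t)) + ((lam / 2 : ℕ) : ZMod lam) := by
      linear_combination hd'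
    rw [hA, hB, chi_shift lam hlam heven]
    ring
  refine Finset.sum_involution (fun i _ => sig π t i) ?_ ?_ ?_ ?_
  · -- cancellation
    intro i hi
    have hit : i + t < 2 ^ m := by
      have := mem_range.mp hi
      omega
    by_cases hv0 : vfun π t i = 0
    · have hσ : sig π t i = i := by unfold sig; rw [if_pos hv0]
      rw [hσ, hzero i hit hv0]
      simp
    · have hσ : sig π t i = flp (π (vfun π t i - 1)) i := by unfold sig; rw [if_neg hv0]
      obtain ⟨hadd, hlt, hvflp⟩ := hFacts i hit hv0
      have hvm := hVlt i hit
      have DQ := quad_shift lam m heven π hπ.injOn g (vfun π t i) i (i + t)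
        (by omega) hvm (fun γ hγ => vfun_min π t i γ hγ) (vfun_spec π t i (hEx i hit))
      rw [hadd] at DQ
      have hp0 : bit i (π 0) = bit (i + t) (π 0) := vfun_min π t i 0 (by omega)
      have hp0c : ((bit i (π 0) : ZMod lam)) = ((bit (i + t) (π 0) : ZMod lam)) := by rw [hp0]
      have hp0' : bit (flp (π (vfun π t i - 1)) i) (π 0)
          = bit (flp (π (vfun π t i - 1)) i + t) (π 0) := by
        rw [← hadd]
        by_cases hq : π 0 = π (vfun π t i - 1)
        · rw [hq, bit_flp_self, bit_flp_self, vfun_min π t i _ (by omega)]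
        · rw [bit_flp_of_ne _ _ i hq, bit_flp_of_ne _ _ (i + t) hq, hp0]
      have hp0c' : ((bit (flp (π (vfun π t i - 1)) i) (π 0) : ZMod lam))
          = ((bit (flp (π (vfun π t i - 1)) i + t) (π 0) : ZMod lam)) := by rw [hp0']
      rw [hσ]
      have e1 : (fq lam m π g i + e) - (fq lam m π g (i + t) + e)
          = ((fq lam m π g (flp (π (vfun π t i - 1)) i) + e)
              - (fq lam m π g (flp (π (vfun π t i - 1)) i + t) + e))
            + ((lam / 2 : ℕ) : ZMod lam) := by linear_combination DQ
      have e2 : (fq lam m π g i + ((lam / 2 : ℕ) : ZMod lam) * (bit i (π 0) : ZMod lam) + e')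
            - (fq lam m π g (i + t)
                + ((lam / 2 : ℕ) : ZMod lam) * (bit (i + t) (π 0) : ZMod lam) + e')
          = ((fq lam m π g (flp (π (vfun π t i - 1)) i) + e)
              - (fq lam m π g (flp (π (vfun π t i - 1)) i + t) + e))
            + ((lam / 2 : ℕ) : ZMod lam) := by
        linear_combination DQ + ((lam / 2 : ℕ) : ZMod lam) * hp0c
      have e3 : (fq lam m π g (flp (π (vfun π t i - 1)) i)
            + ((lam / 2 : ℕ) : ZMod lam)
                * (bit (flp (π (vfun π t i - 1)) i) (π 0) : ZMod lam) + e')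
            - (fq lam m π g (flp (π (vfun π t i - 1)) i + t)
                + ((lam / 2 : ℕ) : ZMod lam)
                    * (bit (flp (π (vfun π t i - 1)) i + t) (π 0) : ZMod lam) + e')
          = (fq lam m π g (flp (π (vfun π t i - 1)) i) + e)
              - (fq lam m π g (flp (π (vfun π t i - 1)) i + t) + e) := by
        linear_combination ((lam / 2 : ℕ) : ZMod lam) * hp0c'
      rw [e1, e2, e3, chi_shift lam hlam heven]
      ring
  · -- g_ne
    intro i hi hf0
    have hit : i + t < 2 ^ m := by
      have := mem_range.mp hi
      omega
    by_cases hv0 : vfun π t i = 0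
    · exact absurd (hzero i hit hv0) hf0
    · have hσ : sig π t i = flp (π (vfun π t i - 1)) i := by unfold sig; rw [if_neg hv0]
      rw [hσ]
      intro heq
      have hbs := bit_flp_self (π (vfun π t i - 1)) i
      rw [heq] at hbs
      have hb := bit_lt_two i (π (vfun π t i - 1))
      omega
  · -- g_mem
    intro i hi
    have hit : i + t < 2 ^ m := by
      have := mem_range.mp hi
      omega
    by_cases hv0 : vfun π t i = 0
    · have hσ : sig π t i = i := by unfold sig; rw [if_pos hv0]
      rwa [hσ]
    · have hσ : sig π t i = flp (π (vfun π t i - 1)) i := by unfold sig; rw [if_neg hv0]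
      obtain ⟨hadd, hlt, hvflp⟩ := hFacts i hit hv0
      rw [hσ, mem_range]
      omega
  · -- g_inv
    intro i hi
    have hit : i + t < 2 ^ m := by
      have := mem_range.mp hi
      omega
    by_cases hv0 : vfun π t i = 0
    · have hσ : sig π t i = i := by unfold sig; rw [if_pos hv0]
      simp only [hσ]
    · have hσ : sig π t i = flp (π (vfun π t i - 1)) i := by unfold sig; rw [if_neg hv0]
      obtain ⟨hadd, hlt, hvflp⟩ := hFacts i hit hv0
      simp only [hσ]
      unfold sig
      rw [hvflp, if_neg hv0, flp_flp]

end GCP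

open GCP

/-- Paterson: the standard quadratic form construction yields a
Golay complementary pair of length `2^m`. The permutation `π` of `{0,…,m-1}` is
modelled as a map `ℕ → ℕ` that is a bijection of `{0,…,m-1}` onto itself. -/
theorem paterson_gcp (lam m : ℕ) (hlam : 0 < lam) (heven : 2 ∣ lam) (hm : 1 ≤ m)
    (π : ℕ → ℕ) (hπ : Set.BijOn π (Set.Iio m) (Set.Iio m))
    (g : ℕ → ZMod lam) (e e' : ZMod lam) :
    ∀ τ : ℤ, 0 < |τ| → |τ| < (2 ^ m : ℕ) →
      accf (2 ^ m)
          (seqC lam (fun i =>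
            ((lam / 2 : ℕ) : ZMod lam) *
                ∑ β ∈ range (m - 1), (bit i (π β) : ZMod lam) * (bit i (π (β + 1)) : ZMod lam)
              + ∑ β ∈ range m, g β * (bit i β : ZMod lam) + e))
          (seqC lam (fun i =>
            ((lam / 2 : ℕ) : ZMod lam) *
                ∑ β ∈ range (m - 1), (bit i (π β) : ZMod lam) * (bit i (π (β + 1)) : ZMod lam)
              + ∑ β ∈ range m, g β * (bit i β : ZMod lam) + e)) τ
      + accf (2 ^ m)
          (seqC lam (fun i =>
            ((lam / 2 : ℕ) : ZMod lam) *
                ∑ β ∈ range (m - 1), (bit i (π β) : ZMod lam) * (bit i (π (β + 1)) : ZMod lam)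
              + ∑ β ∈ range m, g β * (bit i β : ZMod lam)
              + ((lam / 2 : ℕ) : ZMod lam) * (bit i (π 0) : ZMod lam) + e'))
          (seqC lam (fun i =>
            ((lam / 2 : ℕ) : ZMod lam) *
                ∑ β ∈ range (m - 1), (bit i (π β) : ZMod lam) * (bit i (π (β + 1)) : ZMod lam)
              + ∑ β ∈ range m, g β * (bit i β : ZMod lam)
              + ((lam / 2 : ℕ) : ZMod lam) * (bit i (π 0) : ZMod lam) + e')) τ
      = 0 := by
  intro τ habs hlt
  haveI : NeZero lam := ⟨hlam.ne'⟩
  have hτne : τ ≠ 0 := by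
    intro h
    rw [h] at habs
    simp at habs
  rcases lt_or_gt_of_ne hτne with hneg | hpos
  · -- τ < 0
    obtain ⟨s, rfl⟩ : ∃ s : ℕ, τ = -(s : ℤ) := by
      refine ⟨(-τ).toNat, ?_⟩
      rw [Int.toNat_of_nonneg (by omega)]
      ring
    have hs : 0 < s := by
      rcases Nat.eq_zero_or_pos s with h | h
      · subst h; simp at hτne
      · exact h
    have hs2 : s < 2 ^ m := by
      have : |(-(s : ℤ))| = (s : ℤ) := by
        rw [abs_neg, abs_of_nonneg (by positivity)]
      rw [this] at hlt
      exact_mod_cast hlt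
    have h1 : ¬(0 ≤ -(s : ℤ) ∧ -(s : ℤ) < ((2 ^ m : ℕ) : ℤ)) := by
      rintro ⟨h, -⟩
      omega
    have h2 : -((2 ^ m : ℕ) : ℤ) < -(s : ℤ) ∧ -(s : ℤ) ≤ -1 := by
      constructor
      · have : (s : ℤ) < ((2 ^ m : ℕ) : ℤ) := by exact_mod_cast hs2
        omega
      · omega
    have htn : (-(-(s : ℤ))).toNat = s := by
      rw [neg_neg, Int.toNat_natCast]
    rw [accf, accf, if_neg h1, if_neg h1, if_pos h2, if_pos h2, htn,
      ← Finset.sum_add_distrib]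
    have hmain := main_sum lam m hlam heven hm π hπ g e e' s hs hs2
    simp only [fq] at hmain
    have h3 := congrArg (starRingEnd ℂ) hmain
    rw [map_sum, map_zero] at h3
    refine Eq.trans ?_ h3
    apply Finset.sum_congr rfl
    intro i _
    rw [map_add, seqC_eq, seqC_eq, seqC_eq, seqC_eq, chi_sub, chi_sub, conj_chi, conj_chi,
      neg_sub, neg_sub]
  · -- τ > 0
    obtain ⟨t, rfl⟩ : ∃ t : ℕ, τ = (t : ℤ) := ⟨τ.toNat, (Int.toNat_of_nonneg hpos.le).symm⟩
    have ht : 0 < t := by exact_mod_cast hpos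
    have ht2 : t < 2 ^ m := by
      rw [abs_of_nonneg (by positivity)] at hlt
      exact_mod_cast hlt
    have h1 : (0 : ℤ) ≤ (t : ℤ) ∧ (t : ℤ) < ((2 ^ m : ℕ) : ℤ) := by
      constructor
      · positivity
      · exact_mod_cast ht2
    have htn : ((t : ℤ)).toNat = t := Int.toNat_natCast t
    rw [accf, accf, if_pos h1, if_pos h1, htn, ← Finset.sum_add_distrib]
    have hmain := main_sum lam m hlam heven hm π hπ g e e' t ht ht2
    simp only [fq] at hmain
    refine Eq.trans ?_ hmain
    apply Finset.sum_congr rfl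
    intro i _
    rw [seqC_eq, seqC_eq, seqC_eq, seqC_eq, chi_sub, chi_sub]
end

section
/- For any shifts satisfying β·N ≤ τ < (β+1)·N with N = ∏_α p_α^{m_α−1} and β ∈ {1,...,∏_α p_α − 1}, and any t_1 ≠ t_2 in ∏_α Z_{p_α}, the ACCF of the constructed IGC codes vanishes: C(C_{s_1,t_1}, C_{s_2,t_2})(τ) = 0 for all s_1, s_2. (Inter-group zero correlation beyond the ZCZ.) -/
open Finset

/-- The `β`-th base-`p α` digit of the `α`-th mixed-radix block of `j`, where the
`α`-th block has size `p α ^ (m α - 1)` and earlier blocks vary faster. This realizes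
the lexicographic enumeration of `∏_α Z_{p_α}^{m_α-1}`: `dig p m j α β = v_{p_α,β+1}`. -/
def dig {k : ℕ} (p m : Fin k → ℕ) (j : ℕ) (α : Fin k) (β : ℕ) : ℕ :=
  (j / ∏ α' ∈ Finset.univ.filter (fun α' => α' < α), p α' ^ (m α' - 1)) %
      (p α ^ (m α - 1)) / p α ^ β % p α

/-- The `α`-th coordinate of `j` in the mixed-radix enumeration of `∏_α Z_{p_α}`. -/
def odig {k : ℕ} (p : Fin k → ℕ) (j : ℕ) (α : Fin k) : ℕ :=
  (j / ∏ α' ∈ Finset.univ.filter (fun α' => α' < α), p α') % p α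

/-- The multivariable function `f = f_1 + ⋯ + f_k`, where
`f_α = (λ/p_α)·Σ_β v_{π_α(β)} v_{π_α(β+1)} + Σ_β c_{α,β} v_β + c_α`
(indices `0`-based, `π α` a bijection of `{0,…,m_α-2}`). -/
def fFun {k : ℕ} (p m : Fin k → ℕ) (lam : ℕ) (π : Fin k → ℕ → ℕ)
    (c : Fin k → ℕ → ZMod lam) (c' : Fin k → ZMod lam) (j : ℕ) : ZMod lam :=
  ∑ α, (((lam / p α : ℕ) : ZMod lam) *
        ∑ β ∈ range (m α - 2),
          (dig p m j α (π α β) : ZMod lam) * (dig p m j α (π α (β + 1)) : ZMod lam)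
      + ∑ β ∈ range (m α - 1), c α β * (dig p m j α β : ZMod lam) + c' α)

/-- The function `R_t^γ = f + Σ_α (λ/p_α) v_{π_α(1)} γ_α + Σ_α (λ/p_α) v_{π_α(m_α-1)} t_α`. -/
def RFun {k : ℕ} (p m : Fin k → ℕ) (lam : ℕ) (π : Fin k → ℕ → ℕ)
    (c : Fin k → ℕ → ZMod lam) (c' : Fin k → ZMod lam)
    (γ t : ∀ α, Fin (p α)) (j : ℕ) : ZMod lam :=
  fFun p m lam π c c' j
    + ∑ α, ((lam / p α : ℕ) : ZMod lam) * (dig p m j α (π α 0) : ZMod lam) * ((γ α : ℕ) : ZMod lam)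
    + ∑ α, ((lam / p α : ℕ) : ZMod lam) * (dig p m j α (π α (m α - 2)) : ZMod lam) *
        ((t α : ℕ) : ZMod lam)

/-- The function `a_{s,t}^γ = R_t^γ + T_s` on `∏_α Z_{p_α}^{m_α-1} × ∏_α Z_{p_α}`,
with the `∏_α Z_{p_α}` coordinates varying slowest (outer index). -/
def aFun {k : ℕ} (p m : Fin k → ℕ) (lam : ℕ) (π : Fin k → ℕ → ℕ)
    (c : Fin k → ℕ → ZMod lam) (c' : Fin k → ZMod lam)
    (s t γ : ∀ α, Fin (p α)) (j : ℕ) : ZMod lam :=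
  RFun p m lam π c c' γ t (j % ∏ α, p α ^ (m α - 1))
    + ∑ α, ((lam / p α : ℕ) : ZMod lam) *
        (odig p (j / ∏ α', p α' ^ (m α' - 1)) α : ZMod lam) * ((s α : ℕ) : ZMod lam)

noncomputable def chi (lam : ℕ) (x : ZMod lam) : ℂ :=
  Complex.exp (2 * Real.pi * Complex.I * (x.val : ℂ) / (lam : ℂ))

noncomputable def eInt (lam : ℕ) (a : ℤ) : ℂ :=
  Complex.exp (2 * Real.pi * Complex.I * (a : ℂ) / (lam : ℂ))

lemma eInt_eq_of_emod (lam : ℕ) (hlam : 0 < lam) (a b : ℤ) (h : a % lam = b % lam) :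
    eInt lam a = eInt lam b := by
  unfold eInt
  have hl : (lam : ℂ) ≠ 0 := by exact_mod_cast hlam.ne'
  obtain ⟨t, ht⟩ : (lam : ℤ) ∣ (b - a) := (show Int.ModEq (lam:ℤ) a b from h).dvd
  have hC : (a : ℂ) = (b : ℂ) - (lam : ℂ) * (t : ℂ) := by
    have := congrArg (fun z : ℤ => (z : ℂ)) ht
    push_cast at this
    linear_combination -this
  rw [hC]
  rw [show 2 * Real.pi * Complex.I * ((b : ℂ) - lam * t) / lam
      = 2 * Real.pi * Complex.I * (b:ℂ) / lam + ((-t : ℤ) : ℂ) * (2 * Real.pi * Complex.I) by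
    push_cast; field_simp; ring]
  rw [Complex.exp_add, Complex.exp_int_mul_two_pi_mul_I, mul_one]

lemma eInt_add (lam : ℕ) (a b : ℤ) : eInt lam (a + b) = eInt lam a * eInt lam b := by
  unfold eInt
  rw [← Complex.exp_add]
  congr 1
  push_cast
  ring

lemma chi_intCast (lam : ℕ) (hlam : 0 < lam) (a : ℤ) :
    chi lam ((a : ℤ) : ZMod lam) = eInt lam a := by
  have : NeZero lam := ⟨hlam.ne'⟩
  unfold chi
  have h := ZMod.val_intCast (n := lam) a
  refine (eInt_eq_of_emod lam hlam _ a ?_)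
  rw [h]
  exact Int.emod_emod_of_dvd a dvd_rfl

lemma zmod_eq_intCast (lam : ℕ) (hlam : 0 < lam) (x : ZMod lam) :
    x = ((x.val : ℤ) : ZMod lam) := by
  have : NeZero lam := ⟨hlam.ne'⟩
  simp [ZMod.natCast_val, ZMod.intCast_cast]

lemma chi_add (lam : ℕ) (hlam : 0 < lam) (x y : ZMod lam) :
    chi lam (x + y) = chi lam x * chi lam y := by
  rw [zmod_eq_intCast lam hlam x, zmod_eq_intCast lam hlam y, ← Int.cast_add,
    chi_intCast lam hlam, chi_intCast lam hlam, chi_intCast lam hlam, eInt_add]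

lemma chi_zero (lam : ℕ) (hlam : 0 < lam) : chi lam 0 = 1 := by
  unfold chi
  have : NeZero lam := ⟨hlam.ne'⟩
  simp [ZMod.val_zero]

lemma conj_chi (lam : ℕ) (hlam : 0 < lam) (x : ZMod lam) :
    (starRingEnd ℂ) (chi lam x) = chi lam (-x) := by
  rw [zmod_eq_intCast lam hlam x, chi_intCast lam hlam, ← Int.cast_neg,
    chi_intCast lam hlam]
  unfold eInt
  rw [← Complex.exp_conj]
  congr 1
  simp [map_div₀, map_ofNat]

lemma chi_sum {ι : Type*} (lam : ℕ) (hlam : 0 < lam) (s : Finset ι) (f : ι → ZMod lam) :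
    chi lam (∑ x ∈ s, f x) = ∏ x ∈ s, chi lam (f x) := by
  classical
  induction s using Finset.induction_on with
  | empty => simp [chi_zero lam hlam]
  | @insert a s' hx ih =>
    rw [Finset.sum_insert hx, Finset.prod_insert hx, chi_add lam hlam, ih]

lemma chi_geom (lam q : ℕ) (hlam : 0 < lam) (hq : q ∣ lam) (hq1 : 1 < q)
    (σ : ℤ) (hσ : ¬ ((q : ℤ) ∣ σ)) (x : ZMod lam) :
    ∑ d ∈ range q, chi lam (x + (((lam / q : ℕ) * d * σ : ℤ) : ZMod lam)) = 0 := by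
  have hq0 : (0:ℝ) < q := by exact_mod_cast Nat.lt_of_lt_of_le Nat.zero_lt_one hq1.le
  have hqC : (q : ℂ) ≠ 0 := by exact_mod_cast (by positivity : (0:ℝ) < q).ne'
  have hlq : (lam / q : ℕ) * q = lam := Nat.div_mul_cancel hq
  have hlC : (lam : ℂ) ≠ 0 := by exact_mod_cast hlam.ne'
  set z : ℂ := Complex.exp (2 * Real.pi * Complex.I * (σ : ℂ) / (q : ℂ)) with hz
  have hstep : ∀ d : ℕ, chi lam (x + (((lam / q : ℕ) * d * σ : ℤ) : ZMod lam))
      = chi lam x * z ^ d := by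
    intro d
    rw [chi_add lam hlam, chi_intCast lam hlam]
    congr 1
    unfold eInt
    rw [hz, ← Complex.exp_nat_mul]
    congr 1
    have : (lam : ℂ) = (lam / q : ℕ) * q := by exact_mod_cast hlq.symm
    rw [this]
    have hlqC : ((lam / q : ℕ) : ℂ) ≠ 0 := by
      have : 0 < lam / q := Nat.div_pos (Nat.le_of_dvd hlam hq) (by omega)
      exact_mod_cast this.ne'
    field_simp
    push_cast
    rw [← Int.natCast_div, Int.cast_natCast]
  simp only [hstep]
  rw [← Finset.mul_sum]
  have hz1 : z ≠ 1 := by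
    intro h
    rw [hz, Complex.exp_eq_one_iff] at h
    obtain ⟨n, hn⟩ := h
    apply hσ
    refine ⟨n, ?_⟩
    have : (σ : ℂ) = q * n := by
      have h2 : (2 : ℂ) ≠ 0 := two_ne_zero
      have hπ : (Real.pi : ℂ) ≠ 0 := by exact_mod_cast Real.pi_ne_zero
      have hI : Complex.I ≠ 0 := Complex.I_ne_zero
      field_simp at hn
      have := mul_left_cancel₀ (mul_ne_zero (mul_ne_zero h2 hπ) hI) (by linear_combination (2 * (Real.pi:ℂ) * Complex.I) * hn :
        (2 * (Real.pi:ℂ) * Complex.I) * (σ:ℂ) = (2 * (Real.pi:ℂ) * Complex.I) * ((q:ℂ) * n))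
      exact this
    exact_mod_cast this
  have hzq : z ^ q = 1 := by
    rw [hz, ← Complex.exp_nat_mul]
    rw [show (q:ℂ) * (2 * Real.pi * Complex.I * (σ:ℂ) / q) = σ * (2 * Real.pi * Complex.I) by
      field_simp]
    exact Complex.exp_int_mul_two_pi_mul_I σ
  rw [geom_sum_eq hz1, hzq]
  norm_num

namespace IGC
variable {k : ℕ}

def Qa (p m : Fin k → ℕ) (α : Fin k) : ℕ :=
  ∏ α' ∈ Finset.univ.filter (fun α' => α' < α), p α' ^ (m α' - 1)

def NAa (p m : Fin k → ℕ) (α : Fin k) : ℕ := p α ^ (m α - 1)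

def Nn (p m : Fin k → ℕ) : ℕ := ∏ α, p α ^ (m α - 1)

def blk (p m : Fin k → ℕ) (x : ℕ) (α : Fin k) : ℕ := x / Qa p m α % NAa p m α

lemma dig_eq (p m : Fin k → ℕ) (j : ℕ) (α : Fin k) (β : ℕ) :
    dig p m j α β = blk p m j α / p α ^ β % p α := rfl

/-- set the digit at `(α, β)` to `d` -/
def sd (p m : Fin k → ℕ) (r : ℕ) (α : Fin k) (β : ℕ) (d : ℕ) : ℕ :=
  r % Qa p m α + Qa p m α * (blk p m r α % p α ^ β
    + p α ^ β * (d + p α * (blk p m r α / p α ^ (β + 1)))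
    + NAa p m α * (r / (Qa p m α * NAa p m α)))

section
variable (p m : Fin k → ℕ)

lemma Qa_pos (hp2 : ∀ α, 2 ≤ p α) (α : Fin k) : 0 < Qa p m α :=
  Finset.prod_pos fun α' _ => pow_pos (by have := hp2 α'; omega) _

lemma NAa_pos (hp2 : ∀ α, 2 ≤ p α) (α : Fin k) : 0 < NAa p m α := pow_pos (by have := hp2 α; omega) _

lemma Nn_pos (hp2 : ∀ α, 2 ≤ p α) : 0 < Nn p m :=
  Finset.prod_pos fun α' _ => pow_pos (by have := hp2 α'; omega) _

lemma QN_dvd_Nn (α : Fin k) : Qa p m α * NAa p m α ∣ Nn p m := by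
  classical
  have h1 : Qa p m α * NAa p m α
      = ∏ α' ∈ insert α (Finset.univ.filter (fun α' => α' < α)), p α' ^ (m α' - 1) := by
    rw [Finset.prod_insert (by simp)]
    rw [Qa, NAa]; ring
  rw [h1, Nn]
  exact Finset.prod_dvd_prod_of_subset _ _ _ (fun x _ => Finset.mem_univ x)

lemma QN_dvd_Qa {α α2 : Fin k} (h : α < α2) : Qa p m α * NAa p m α ∣ Qa p m α2 := by
  classical
  have h1 : Qa p m α * NAa p m α
      = ∏ α' ∈ insert α (Finset.univ.filter (fun α' => α' < α)), p α' ^ (m α' - 1) := by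
    rw [Finset.prod_insert (by simp)]
    rw [Qa, NAa]; ring
  rw [h1, Qa]
  refine Finset.prod_dvd_prod_of_subset _ _ _ (fun x hx => ?_)
  simp only [Finset.mem_insert, Finset.mem_filter, Finset.mem_univ, true_and] at hx ⊢
  rcases hx with rfl | hx
  · exact h
  · exact lt_trans hx h

lemma blk_lt (hp2 : ∀ α, 2 ≤ p α) (x : ℕ) (α : Fin k) : blk p m x α < NAa p m α :=
  Nat.mod_lt _ (NAa_pos p m hp2 α)

lemma dig_lt (hp2 : ∀ α, 2 ≤ p α) (j : ℕ) (α : Fin k) (β : ℕ) : dig p m j α β < p α :=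
  Nat.mod_lt _ (by have := hp2 α; omega)

/-- extracting digit `β` only depends on `n % pa^(β+1)` -/
lemma digit_mod (pa n β : ℕ) (hpa : 0 < pa) :
    n / pa ^ β % pa = n % pa ^ (β + 1) / pa ^ β := by
  have hX : 0 < pa ^ β := pow_pos hpa β
  conv_lhs => rw [show n = n % pa ^ (β+1) + pa ^ (β+1) * (n / pa ^ (β+1)) from
    (Nat.mod_add_div _ _).symm]
  rw [pow_succ]
  rw [show pa ^ β * pa * (n / (pa ^ β * pa)) = pa ^ β * (pa * (n / (pa ^ β * pa))) by ring,
    Nat.add_mul_div_left _ _ hX, Nat.add_mul_mod_self_left]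
  have : n % (pa ^ β * pa) / pa ^ β < pa := by
    apply Nat.div_lt_of_lt_mul
    rw [mul_comm (pa ^ β) pa] at *
    exact Nat.mod_lt _ (by positivity)
  rw [← pow_succ] at this ⊢
  exact Nat.mod_eq_of_lt this

/-- the modified block value -/
lemma bprime_lt (pa e β b d : ℕ) (hpa : 2 ≤ pa) (hβ : β < e) (hb : b < pa ^ e) (hd : d < pa) :
    b % pa ^ β + pa ^ β * (d + pa * (b / pa ^ (β + 1))) < pa ^ e := by
  set X := pa ^ β with hXdef
  have hX : 0 < X := pow_pos (by omega) β
  have hZ : b / pa ^ (β+1) + 1 ≤ pa ^ e / pa ^ (β+1) :=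
    Nat.div_lt_div_of_lt_of_dvd (pow_dvd_pow pa (by omega)) hb
  calc b % X + X * (d + pa * (b / pa ^ (β+1)))
      < X + X * (d + pa * (b / pa ^ (β+1))) := by
        have := Nat.mod_lt b (y := X) hX; omega
    _ = X * (1 + d + pa * (b / pa ^ (β+1))) := by ring
    _ ≤ X * (pa + pa * (b / pa ^ (β+1))) := by
        apply Nat.mul_le_mul_left
        have : 1 + d ≤ pa := by omega
        omega
    _ = (X * pa) * (b / pa ^ (β+1) + 1) := by ring
    _ ≤ (X * pa) * (pa ^ e / pa ^ (β+1)) := Nat.mul_le_mul_left _ hZ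
    _ = pa ^ e := by
        rw [hXdef, ← pow_succ]
        exact Nat.mul_div_cancel' (pow_dvd_pow pa (by omega)) 

end
end IGC

namespace IGC
section
variable (p m : Fin k → ℕ)

lemma sd_mod_Qa (r : ℕ) (α : Fin k) (β d : ℕ) :
    sd p m r α β d % Qa p m α = r % Qa p m α := by
  unfold sd
  rw [Nat.add_mul_mod_self_left]
  exact Nat.mod_mod_of_dvd r dvd_rfl

lemma sd_div_Qa (hp2 : ∀ α, 2 ≤ p α) (r : ℕ) (α : Fin k) (β d : ℕ) :
    sd p m r α β d / Qa p m α
      = blk p m r α % p α ^ β + p α ^ β * (d + p α * (blk p m r α / p α ^ (β + 1)))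
        + NAa p m α * (r / (Qa p m α * NAa p m α)) := by
  unfold sd
  rw [Nat.add_mul_div_left _ _ (Qa_pos p m hp2 α),
    Nat.div_eq_of_lt (Nat.mod_lt _ (Qa_pos p m hp2 α)), zero_add]

lemma hb'_lt (hp2 : ∀ α, 2 ≤ p α) (r : ℕ) (α : Fin k) (β d : ℕ)
    (hβ : β < m α - 1) (hd : d < p α) :
    blk p m r α % p α ^ β + p α ^ β * (d + p α * (blk p m r α / p α ^ (β + 1)))
      < NAa p m α :=
  bprime_lt (p α) (m α - 1) β (blk p m r α) d (hp2 α) hβ (blk_lt p m hp2 r α) hd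

lemma blk_sd_same (hp2 : ∀ α, 2 ≤ p α) (r : ℕ) (α : Fin k) (β d : ℕ)
    (hβ : β < m α - 1) (hd : d < p α) :
    blk p m (sd p m r α β d) α
      = blk p m r α % p α ^ β + p α ^ β * (d + p α * (blk p m r α / p α ^ (β + 1))) := by
  rw [blk, sd_div_Qa p m hp2, Nat.add_mul_mod_self_left,
    Nat.mod_eq_of_lt (hb'_lt p m hp2 r α β d hβ hd)]

lemma sd_div_QN (hp2 : ∀ α, 2 ≤ p α) (r : ℕ) (α : Fin k) (β d : ℕ)
    (hβ : β < m α - 1) (hd : d < p α) :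
    sd p m r α β d / (Qa p m α * NAa p m α) = r / (Qa p m α * NAa p m α) := by
  rw [← Nat.div_div_eq_div_mul, sd_div_Qa p m hp2, Nat.add_mul_div_left _ _ (NAa_pos p m hp2 α),
    Nat.div_eq_of_lt (hb'_lt p m hp2 r α β d hβ hd), zero_add]

lemma dig_sd_same (hp2 : ∀ α, 2 ≤ p α) (r : ℕ) (α : Fin k) (β d : ℕ)
    (hβ : β < m α - 1) (hd : d < p α) :
    dig p m (sd p m r α β d) α β = d := by
  have hX : 0 < p α ^ β := pow_pos (by have := hp2 α; omega) β
  rw [dig_eq, blk_sd_same p m hp2 r α β d hβ hd, Nat.add_mul_div_left _ _ hX,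
    Nat.div_eq_of_lt (Nat.mod_lt _ hX), zero_add, Nat.add_mul_mod_self_left,
    Nat.mod_eq_of_lt hd]

lemma sd_b_mod (hp2 : ∀ α, 2 ≤ p α) (r : ℕ) (α : Fin k) (β d : ℕ)
    (hβ : β < m α - 1) (hd : d < p α) :
    blk p m (sd p m r α β d) α % p α ^ β = blk p m r α % p α ^ β := by
  rw [blk_sd_same p m hp2 r α β d hβ hd, Nat.add_mul_mod_self_left]
  exact Nat.mod_mod_of_dvd _ dvd_rfl

lemma sd_b_div (hp2 : ∀ α, 2 ≤ p α) (r : ℕ) (α : Fin k) (β d : ℕ)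
    (hβ : β < m α - 1) (hd : d < p α) :
    blk p m (sd p m r α β d) α / p α ^ (β + 1) = blk p m r α / p α ^ (β + 1) := by
  have hX : 0 < p α ^ β := pow_pos (by have := hp2 α; omega) β
  rw [blk_sd_same p m hp2 r α β d hβ hd]
  rw [show blk p m r α % p α ^ β + p α ^ β * (d + p α * (blk p m r α / p α ^ (β + 1)))
      = (blk p m r α % p α ^ β + p α ^ β * d)
        + p α ^ (β+1) * (blk p m r α / p α ^ (β + 1)) by rw [pow_succ]; ring]
  rw [Nat.add_mul_div_left _ _ (pow_pos (by have := hp2 α; omega) (β+1))]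
  rw [Nat.div_eq_of_lt, zero_add]
  have h1 : blk p m r α % p α ^ β < p α ^ β := Nat.mod_lt _ hX
  have : p α ^ β * d + p α ^ β ≤ p α ^ β * p α := by
    have : d + 1 ≤ p α := hd
    calc p α ^ β * d + p α ^ β = p α ^ β * (d+1) := by ring
      _ ≤ p α ^ β * p α := Nat.mul_le_mul_left _ this
  rw [pow_succ]
  omega

end
end IGC

namespace IGC
section
variable (p m : Fin k → ℕ)

lemma dig_sd_ne (hp2 : ∀ α, 2 ≤ p α) (r : ℕ) (α : Fin k) (β d : ℕ)
    (hβ : β < m α - 1) (hd : d < p α) (β2 : ℕ) (hne : β2 ≠ β) :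
    dig p m (sd p m r α β d) α β2 = dig p m r α β2 := by
  have hpa : 0 < p α := by have := hp2 α; omega
  rcases lt_or_gt_of_ne hne with h | h
  · -- β2 < β
    rw [dig_eq, dig_eq, digit_mod _ _ _ hpa, digit_mod _ _ _ hpa]
    congr 1
    have hdv : p α ^ (β2 + 1) ∣ p α ^ β := pow_dvd_pow _ (by omega)
    rw [← Nat.mod_mod_of_dvd (blk p m (sd p m r α β d) α) hdv,
      ← Nat.mod_mod_of_dvd (blk p m r α) hdv, sd_b_mod p m hp2 r α β d hβ hd]
  · -- β2 > β
    rw [dig_eq, dig_eq]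
    have hsplit : p α ^ β2 = p α ^ (β + 1) * p α ^ (β2 - (β+1)) := by
      rw [← pow_add]; congr 1; omega
    rw [hsplit, ← Nat.div_div_eq_div_mul, ← Nat.div_div_eq_div_mul,
      sd_b_div p m hp2 r α β d hβ hd]

lemma blk_add_mul (hp2 : ∀ α, 2 ≤ p α) (x cmul : ℕ) (α2 : Fin k) :
    blk p m (x + Qa p m α2 * NAa p m α2 * cmul) α2 = blk p m x α2 := by
  rw [blk, blk, show Qa p m α2 * NAa p m α2 * cmul = Qa p m α2 * (NAa p m α2 * cmul) by ring,
    Nat.add_mul_div_left _ _ (Qa_pos p m hp2 α2), Nat.add_mul_mod_self_left]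

lemma sd_add (hp2 : ∀ α, 2 ≤ p α) (r : ℕ) (α : Fin k) (β d : ℕ) :
    sd p m r α β d + dig p m r α β * (Qa p m α * p α ^ β)
      = r + d * (Qa p m α * p α ^ β) := by
  have hpa : 0 < p α := by have := hp2 α; omega
  have hX : 0 < p α ^ β := pow_pos hpa β
  have hb : blk p m r α
      = blk p m r α % p α ^ β
        + p α ^ β * (dig p m r α β + p α * (blk p m r α / p α ^ (β+1))) := by
    rw [dig_eq]
    have h1 : blk p m r α / p α ^ β % p α + p α * (blk p m r α / p α ^ β / p α)
        = blk p m r α / p α ^ β := Nat.mod_add_div _ _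
    have h2 : blk p m r α / p α ^ β / p α = blk p m r α / p α ^ (β+1) := by
      rw [Nat.div_div_eq_div_mul, ← pow_succ]
    rw [← h2, h1, Nat.mod_add_div]
  have hr : r = r % Qa p m α
      + Qa p m α * (blk p m r α + NAa p m α * (r / (Qa p m α * NAa p m α))) := by
    rw [blk, ← Nat.div_div_eq_div_mul, Nat.mod_add_div (r / Qa p m α) (NAa p m α),
      Nat.mod_add_div]
  unfold sd
  zify
  zify at hb hr
  linear_combination (-(Qa p m α : ℤ)) * hb - hr

lemma sd_lt (hp2 : ∀ α, 2 ≤ p α) (r : ℕ) (α : Fin k) (β d : ℕ)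
    (hβ : β < m α - 1) (hd : d < p α) (hr : r < Nn p m) :
    sd p m r α β d < Nn p m := by
  have hK : 0 < Qa p m α := Qa_pos p m hp2 α
  have hA : 0 < NAa p m α := NAa_pos p m hp2 α
  have hb' := hb'_lt p m hp2 r α β d hβ hd
  have hhi : r / (Qa p m α * NAa p m α) + 1 ≤ Nn p m / (Qa p m α * NAa p m α) :=
    Nat.div_lt_div_of_lt_of_dvd (QN_dvd_Nn p m α) hr
  have hmod : r % Qa p m α < Qa p m α := Nat.mod_lt _ hK
  calc sd p m r α β d
      < Qa p m α * ((blk p m r α % p α ^ β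
          + p α ^ β * (d + p α * (blk p m r α / p α ^ (β + 1)))) + 1
          + NAa p m α * (r / (Qa p m α * NAa p m α))) := by unfold sd; nlinarith [hK]
    _ ≤ Qa p m α * (NAa p m α + NAa p m α * (r / (Qa p m α * NAa p m α))) := by
        apply Nat.mul_le_mul_left; omega
    _ = (Qa p m α * NAa p m α) * (r / (Qa p m α * NAa p m α) + 1) := by ring
    _ ≤ (Qa p m α * NAa p m α) * (Nn p m / (Qa p m α * NAa p m α)) :=
        Nat.mul_le_mul_left _ hhi
    _ = Nn p m := Nat.mul_div_cancel' (QN_dvd_Nn p m α)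

lemma sd_self (hp2 : ∀ α, 2 ≤ p α) (r : ℕ) (α : Fin k) (β : ℕ) :
    sd p m r α β (dig p m r α β) = r := by
  have h := sd_add p m hp2 r α β (dig p m r α β)
  omega

lemma sd_sd (hp2 : ∀ α, 2 ≤ p α) (r : ℕ) (α : Fin k) (β d d' : ℕ)
    (hβ : β < m α - 1) (hd' : d' < p α) :
    sd p m (sd p m r α β d') α β d = sd p m r α β d := by
  conv_lhs => rw [sd]
  rw [sd_mod_Qa, sd_b_mod p m hp2 r α β d' hβ hd', sd_b_div p m hp2 r α β d' hβ hd',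
    sd_div_QN p m hp2 r α β d' hβ hd']
  rfl

lemma dig_sd_block (hp2 : ∀ α, 2 ≤ p α) (r : ℕ) (α : Fin k) (β d : ℕ)
    (hβ : β < m α - 1) (hd : d < p α) (α2 : Fin k) (hne : α2 ≠ α) (β2 : ℕ) :
    dig p m (sd p m r α β d) α2 β2 = dig p m r α2 β2 := by
  suffices h : blk p m (sd p m r α β d) α2 = blk p m r α2 by rw [dig_eq, dig_eq, h]
  rcases lt_or_gt_of_ne hne with h | h
  · -- α2 < α
    obtain ⟨E, hE⟩ := QN_dvd_Qa p m (α := α2) (α2 := α) h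
    have h1 : blk p m (sd p m r α β d + dig p m r α β * (Qa p m α * p α ^ β)) α2
        = blk p m (sd p m r α β d) α2 := by
      rw [show dig p m r α β * (Qa p m α * p α ^ β)
          = Qa p m α2 * NAa p m α2 * (E * p α ^ β * dig p m r α β) by rw [hE]; ring]
      exact blk_add_mul p m hp2 _ _ α2
    have h2 : blk p m (r + d * (Qa p m α * p α ^ β)) α2 = blk p m r α2 := by
      rw [show d * (Qa p m α * p α ^ β)
          = Qa p m α2 * NAa p m α2 * (E * p α ^ β * d) by rw [hE]; ring]
      exact blk_add_mul p m hp2 _ _ α2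
    rw [← h1, sd_add p m hp2, h2]
  · -- α < α2
    obtain ⟨E, hE⟩ := QN_dvd_Qa p m (α := α) (α2 := α2) h
    rw [blk, blk, hE]
    have e1 := Nat.div_div_eq_div_mul (sd p m r α β d) (Qa p m α * NAa p m α) E
    have e2 := Nat.div_div_eq_div_mul r (Qa p m α * NAa p m α) E
    rw [← e1, ← e2, sd_div_QN p m hp2 r α β d hβ hd]

end
end IGC
namespace IGC
section
variable {k : ℕ} (p m : Fin k → ℕ) (lam : ℕ) (π : Fin k → ℕ → ℕ)
  (c : Fin k → ℕ → ZMod lam) (c' : Fin k → ZMod lam)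

def sTerm (s : ∀ α, Fin (p α)) (q : ℕ) : ZMod lam :=
  ∑ α, ((lam / p α : ℕ) : ZMod lam) * (odig p q α : ZMod lam) * ((s α : ℕ) : ZMod lam)

def GF (t s : ∀ α, Fin (p α)) (x q : ℕ) : ZMod lam :=
  fFun p m lam π c c' x
    + ∑ α, ((lam / p α : ℕ) : ZMod lam) * (dig p m x α (π α (m α - 2)) : ZMod lam)
        * ((t α : ℕ) : ZMod lam)
    + sTerm p lam s q

lemma aFun_eq_GF (hp2 : ∀ α, 2 ≤ p α) (s t : ∀ α, Fin (p α)) (j : ℕ) :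
    aFun p m lam π c c' s t (fun α => (⟨0, by have := hp2 α; omega⟩ : Fin (p α))) j
      = GF p m lam π c c' t s (j % Nn p m) (j / Nn p m) := by
  unfold aFun RFun GF sTerm Nn
  simp only [mul_zero, Finset.sum_const_zero, add_zero, Nat.cast_zero, Fin.val_mk]

lemma GF_sd (hp2 : ∀ α, 2 ≤ p α) (hm : ∀ α, 2 ≤ m α)
    (hπ : ∀ α, Set.BijOn (π α) (Set.Iio (m α - 1)) (Set.Iio (m α - 1)))
    (t s : ∀ α, Fin (p α)) (α0 : Fin k) (b : ℕ) (hb : b ≤ m α0 - 2)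
    (x d : ℕ) (hd : d < p α0) (hx0 : dig p m x α0 (π α0 b) = 0) (q : ℕ) :
    GF p m lam π c c' t s (sd p m x α0 (π α0 b) d) q
      = GF p m lam π c c' t s x q
        + (d : ZMod lam) * (((lam / p α0 : ℕ) : ZMod lam) *
            ((if 1 ≤ b then (dig p m x α0 (π α0 (b - 1)) : ZMod lam) else 0)
              + (if b < m α0 - 2 then (dig p m x α0 (π α0 (b + 1)) : ZMod lam) else 0)
              + (if b = m α0 - 2 then ((t α0 : ℕ) : ZMod lam) else 0))
          + c α0 (π α0 b)) := by
  have hm2 : 2 ≤ m α0 := hm α0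
  have hbm : b < m α0 - 1 := by omega
  have hρ : π α0 b < m α0 - 1 := (hπ α0).mapsTo hbm
  set ρ := π α0 b with hρdef
  set x' := sd p m x α0 ρ d with hx'
  -- digit facts
  have hblock : ∀ α2, α2 ≠ α0 → ∀ β2, dig p m x' α2 β2 = dig p m x α2 β2 :=
    fun α2 h β2 => dig_sd_block p m hp2 x α0 ρ d hρ hd α2 h β2
  have hsame : ∀ β2, β2 ≠ ρ → dig p m x' α0 β2 = dig p m x α0 β2 :=
    fun β2 h => dig_sd_ne p m hp2 x α0 ρ d hρ hd β2 h
  have hat : dig p m x' α0 ρ = d := dig_sd_same p m hp2 x α0 ρ d hρ hd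
  -- injectivity tool: for bh < m α0 - 1,  π α0 bh = ρ ↔ bh = b
  have hinj : ∀ bh, bh < m α0 - 1 → (π α0 bh = ρ ↔ bh = b) := by
    intro bh hbh
    constructor
    · intro h; exact (hπ α0).injOn hbh hbm h
    · intro h; rw [h]
  -- per-α difference
  have key : ∀ α : Fin k, α ≠ α0 →
      (((lam / p α : ℕ) : ZMod lam) *
        ∑ β ∈ range (m α - 2),
          (dig p m x' α (π α β) : ZMod lam) * (dig p m x' α (π α (β + 1)) : ZMod lam)
      + ∑ β ∈ range (m α - 1), c α β * (dig p m x' α β : ZMod lam) + c' α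
      + ((lam / p α : ℕ) : ZMod lam) * (dig p m x' α (π α (m α - 2)) : ZMod lam)
          * ((t α : ℕ) : ZMod lam))
      = (((lam / p α : ℕ) : ZMod lam) *
        ∑ β ∈ range (m α - 2),
          (dig p m x α (π α β) : ZMod lam) * (dig p m x α (π α (β + 1)) : ZMod lam)
      + ∑ β ∈ range (m α - 1), c α β * (dig p m x α β : ZMod lam) + c' α
      + ((lam / p α : ℕ) : ZMod lam) * (dig p m x α (π α (m α - 2)) : ZMod lam)
          * ((t α : ℕ) : ZMod lam)) := by
    intro α hα
    simp only [hblock α hα]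
  -- quadratic sum at α0
  have hquad : (∑ β ∈ range (m α0 - 2),
        (dig p m x' α0 (π α0 β) : ZMod lam) * (dig p m x' α0 (π α0 (β + 1)) : ZMod lam))
      = (∑ β ∈ range (m α0 - 2),
        (dig p m x α0 (π α0 β) : ZMod lam) * (dig p m x α0 (π α0 (β + 1)) : ZMod lam))
        + ((if 1 ≤ b then (dig p m x α0 (π α0 (b - 1)) : ZMod lam) else 0)
            + (if b < m α0 - 2 then (dig p m x α0 (π α0 (b + 1)) : ZMod lam) else 0))
          * (d : ZMod lam) := by
    have hper : ∀ bh ∈ range (m α0 - 2),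
        (dig p m x' α0 (π α0 bh) : ZMod lam) * (dig p m x' α0 (π α0 (bh + 1)) : ZMod lam)
        = (dig p m x α0 (π α0 bh) : ZMod lam) * (dig p m x α0 (π α0 (bh + 1)) : ZMod lam)
          + ((if bh = b then (d : ZMod lam) * (dig p m x α0 (π α0 (b + 1)) : ZMod lam) else 0)
            + (if bh + 1 = b then (dig p m x α0 (π α0 (b - 1)) : ZMod lam) * (d : ZMod lam)
                else 0)) := by
      intro bh hbh
      rw [Finset.mem_range] at hbh
      by_cases h1 : bh = b
      · rw [if_pos h1, if_neg (by omega)]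
        have e1 : dig p m x' α0 (π α0 bh) = d := by rw [h1, ← hρdef]; exact hat
        have e2 : dig p m x α0 (π α0 bh) = 0 := by rw [h1, ← hρdef]; exact hx0
        have e3 : dig p m x' α0 (π α0 (bh + 1)) = dig p m x α0 (π α0 (bh + 1)) :=
          hsame _ (fun h => by have := (hinj (bh+1) (by omega)).mp h; omega)
        rw [e1, e2, e3, h1]
        push_cast
        ring
      · by_cases h2 : bh + 1 = b
        · rw [if_neg h1, if_pos h2]
          have e1 : dig p m x' α0 (π α0 bh) = dig p m x α0 (π α0 bh) :=
            hsame _ (fun h => by have := (hinj bh (by omega)).mp h; omega)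
          have e2 : dig p m x' α0 (π α0 (bh + 1)) = d := by rw [h2, ← hρdef]; exact hat
          have e3 : dig p m x α0 (π α0 (bh + 1)) = 0 := by rw [h2, ← hρdef]; exact hx0
          have e4 : dig p m x α0 (π α0 bh) = dig p m x α0 (π α0 (b - 1)) := by
            rw [show bh = b - 1 by omega]
          rw [e1, e2, e3, e4]
          push_cast
          ring
        · rw [if_neg h1, if_neg h2,
            hsame (π α0 bh) (fun h => by have := (hinj bh (by omega)).mp h; omega),
            hsame (π α0 (bh + 1)) (fun h => by have := (hinj (bh+1) (by omega)).mp h; omega)]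
          ring
    have hS1 : (∑ bh ∈ range (m α0 - 2),
          if bh = b then (d : ZMod lam) * (dig p m x α0 (π α0 (b + 1)) : ZMod lam) else 0)
        = (if b < m α0 - 2 then (dig p m x α0 (π α0 (b + 1)) : ZMod lam) else 0)
            * (d : ZMod lam) := by
      rw [Finset.sum_ite_eq' (range (m α0 - 2)) b]
      by_cases hblt : b < m α0 - 2
      · rw [if_pos (Finset.mem_range.mpr hblt), if_pos hblt]; ring
      · rw [if_neg (fun hc => hblt (Finset.mem_range.mp hc)), if_neg hblt]; ring
    have hS2 : (∑ bh ∈ range (m α0 - 2),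
          if bh + 1 = b then (dig p m x α0 (π α0 (b - 1)) : ZMod lam) * (d : ZMod lam) else 0)
        = (if 1 ≤ b then (dig p m x α0 (π α0 (b - 1)) : ZMod lam) else 0) * (d : ZMod lam) := by
      by_cases hb1 : 1 ≤ b
      · have hre : ∀ bh ∈ range (m α0 - 2),
            (if bh + 1 = b then (dig p m x α0 (π α0 (b - 1)) : ZMod lam) * (d : ZMod lam) else 0)
            = (if bh = b - 1 then (dig p m x α0 (π α0 (b - 1)) : ZMod lam) * (d : ZMod lam)
                else 0) := by
          intro bh _; congr 1; simp only [eq_iff_iff]; omega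
        rw [Finset.sum_congr rfl hre, Finset.sum_ite_eq' (range (m α0 - 2)) (b-1),
          if_pos (Finset.mem_range.mpr (by omega)), if_pos hb1]
      · have hre : ∀ bh ∈ range (m α0 - 2),
            (if bh + 1 = b then (dig p m x α0 (π α0 (b - 1)) : ZMod lam) * (d : ZMod lam) else 0)
            = 0 := by intro bh _; rw [if_neg (by omega)]
        rw [Finset.sum_congr rfl hre, Finset.sum_const_zero, if_neg hb1, zero_mul]
    rw [Finset.sum_congr rfl hper, Finset.sum_add_distrib, Finset.sum_add_distrib, hS1, hS2]
    ring
  -- linear sum at α0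
  have hlin : (∑ β ∈ range (m α0 - 1), c α0 β * (dig p m x' α0 β : ZMod lam))
      = (∑ β ∈ range (m α0 - 1), c α0 β * (dig p m x α0 β : ZMod lam))
        + c α0 ρ * (d : ZMod lam) := by
    have hper : ∀ β ∈ range (m α0 - 1),
        c α0 β * (dig p m x' α0 β : ZMod lam)
        = c α0 β * (dig p m x α0 β : ZMod lam)
          + (if β = ρ then c α0 ρ * (d : ZMod lam) else 0) := by
      intro β hβ
      by_cases h : β = ρ
      · rw [if_pos h, h, hat, hx0]; push_cast; ring
      · rw [if_neg h, hsame β h]; ring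
    rw [Finset.sum_congr rfl hper, Finset.sum_add_distrib,
      Finset.sum_ite_eq' (range (m α0 - 1)) ρ, if_pos (Finset.mem_range.mpr hρ)]
  -- t term at α0
  have ht : ((lam / p α0 : ℕ) : ZMod lam) * (dig p m x' α0 (π α0 (m α0 - 2)) : ZMod lam)
        * ((t α0 : ℕ) : ZMod lam)
      = ((lam / p α0 : ℕ) : ZMod lam) * (dig p m x α0 (π α0 (m α0 - 2)) : ZMod lam)
          * ((t α0 : ℕ) : ZMod lam)
        + ((lam / p α0 : ℕ) : ZMod lam)
            * (if b = m α0 - 2 then ((t α0 : ℕ) : ZMod lam) else 0) * (d : ZMod lam) := by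
    by_cases h : b = m α0 - 2
    · rw [if_pos h]
      have e1 : dig p m x' α0 (π α0 (m α0 - 2)) = d := by rw [← h, ← hρdef]; exact hat
      have e2 : dig p m x α0 (π α0 (m α0 - 2)) = 0 := by rw [← h, ← hρdef]; exact hx0
      rw [e1, e2]
      push_cast; ring
    · rw [if_neg h, hsame (π α0 (m α0 - 2))
        (fun hc => by have := (hinj (m α0 - 2) (by omega)).mp hc; omega)]
      ring
  -- assemble
  unfold GF fFun
  rw [← Finset.sum_add_distrib, ← Finset.sum_add_distrib]
  have hW : ∀ α : Fin k,
      (((lam / p α : ℕ) : ZMod lam) *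
        ∑ β ∈ range (m α - 2),
          (dig p m x' α (π α β) : ZMod lam) * (dig p m x' α (π α (β + 1)) : ZMod lam)
      + ∑ β ∈ range (m α - 1), c α β * (dig p m x' α β : ZMod lam) + c' α
      + ((lam / p α : ℕ) : ZMod lam) * (dig p m x' α (π α (m α - 2)) : ZMod lam)
          * ((t α : ℕ) : ZMod lam))
      = (((lam / p α : ℕ) : ZMod lam) *
        ∑ β ∈ range (m α - 2),
          (dig p m x α (π α β) : ZMod lam) * (dig p m x α (π α (β + 1)) : ZMod lam)
      + ∑ β ∈ range (m α - 1), c α β * (dig p m x α β : ZMod lam) + c' α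
      + ((lam / p α : ℕ) : ZMod lam) * (dig p m x α (π α (m α - 2)) : ZMod lam)
          * ((t α : ℕ) : ZMod lam))
      + (if α = α0 then (d : ZMod lam) * (((lam / p α0 : ℕ) : ZMod lam) *
            ((if 1 ≤ b then (dig p m x α0 (π α0 (b - 1)) : ZMod lam) else 0)
              + (if b < m α0 - 2 then (dig p m x α0 (π α0 (b + 1)) : ZMod lam) else 0)
              + (if b = m α0 - 2 then ((t α0 : ℕ) : ZMod lam) else 0))
          + c α0 ρ) else 0) := by
    intro α
    by_cases hα : α = α0
    · subst hα
      rw [if_pos rfl, hquad, hlin, ht]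
      ring
    · rw [if_neg hα, key α hα, add_zero]
  rw [Finset.sum_congr rfl (fun α _ => hW α), Finset.sum_add_distrib,
    Finset.sum_ite_eq' Finset.univ α0, if_pos (Finset.mem_univ α0)]
  ring

end
end IGC
namespace IGC
section
variable {k : ℕ} (p m : Fin k → ℕ) (π : Fin k → ℕ → ℕ)

def bset (τn i : ℕ) (α : Fin k) : Finset ℕ :=
  (Finset.Ioo 0 (m α - 1)).filter
    (fun bh => dig p m (i % Nn p m) α (π α bh) ≠ dig p m ((i + τn) % Nn p m) α (π α bh))

def aset (τn i : ℕ) : Finset (Fin k) :=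
  Finset.univ.filter (fun α => (bset p m π τn i α).Nonempty)

variable (t1 t2 : ∀ α, Fin (p α))

def alphaStar (hne : ∃ α, t1 α ≠ t2 α) (τn i : ℕ) : Fin k :=
  if h : (aset p m π τn i).Nonempty then (aset p m π τn i).min' h
  else (Finset.univ.filter (fun α => t1 α ≠ t2 α)).min'
    (hne.elim (fun α hα => ⟨α, Finset.mem_filter.mpr ⟨Finset.mem_univ α, hα⟩⟩))

def bStar (hne : ∃ α, t1 α ≠ t2 α) (τn i : ℕ) : ℕ :=
  if h : (aset p m π τn i).Nonempty then
    (bset p m π τn i ((aset p m π τn i).min' h)).min'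
      ((Finset.mem_filter.mp (Finset.min'_mem _ h)).2)
  else m (alphaStar p m π t1 t2 hne τn i) - 1

def rhoStar (hne : ∃ α, t1 α ≠ t2 α) (τn i : ℕ) : ℕ :=
  π (alphaStar p m π t1 t2 hne τn i) (bStar p m π t1 t2 hne τn i - 1)

def flip (hne : ∃ α, t1 α ≠ t2 α) (τn i d : ℕ) : ℕ :=
  (i / Nn p m) * Nn p m + sd p m (i % Nn p m) (alphaStar p m π t1 t2 hne τn i)
      (rhoStar p m π t1 t2 hne τn i) d

lemma selSpec (hm : ∀ α, 2 ≤ m α) (hne : ∃ α, t1 α ≠ t2 α) (τn i : ℕ)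
    (hS : ∀ α, dig p m (i % Nn p m) α (π α 0) = dig p m ((i + τn) % Nn p m) α (π α 0)) :
    0 < bStar p m π t1 t2 hne τn i ∧
    bStar p m π t1 t2 hne τn i ≤ m (alphaStar p m π t1 t2 hne τn i) - 1 ∧
    (∀ bh, bh < bStar p m π t1 t2 hne τn i →
      bh < m (alphaStar p m π t1 t2 hne τn i) - 1 →
      dig p m (i % Nn p m) (alphaStar p m π t1 t2 hne τn i)
          (π (alphaStar p m π t1 t2 hne τn i) bh)
        = dig p m ((i + τn) % Nn p m) (alphaStar p m π t1 t2 hne τn i)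
          (π (alphaStar p m π t1 t2 hne τn i) bh)) ∧
    ((bStar p m π t1 t2 hne τn i < m (alphaStar p m π t1 t2 hne τn i) - 1 ∧
        dig p m (i % Nn p m) (alphaStar p m π t1 t2 hne τn i)
          (π (alphaStar p m π t1 t2 hne τn i) (bStar p m π t1 t2 hne τn i))
        ≠ dig p m ((i + τn) % Nn p m) (alphaStar p m π t1 t2 hne τn i)
          (π (alphaStar p m π t1 t2 hne τn i) (bStar p m π t1 t2 hne τn i)))
      ∨ (bStar p m π t1 t2 hne τn i = m (alphaStar p m π t1 t2 hne τn i) - 1 ∧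
          t1 (alphaStar p m π t1 t2 hne τn i) ≠ t2 (alphaStar p m π t1 t2 hne τn i))) := by
  by_cases h : (aset p m π τn i).Nonempty
  · have hαs : alphaStar p m π t1 t2 hne τn i = (aset p m π τn i).min' h := by
      rw [alphaStar, dif_pos h]
    have hbs : bStar p m π t1 t2 hne τn i
        = (bset p m π τn i ((aset p m π τn i).min' h)).min'
          ((Finset.mem_filter.mp (Finset.min'_mem _ h)).2) := by
      rw [bStar, dif_pos h]
    have hmem := Finset.min'_mem (bset p m π τn i ((aset p m π τn i).min' h))
      ((Finset.mem_filter.mp (Finset.min'_mem _ h)).2)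
    rw [← hbs, ← hαs] at hmem
    rw [bset, Finset.mem_filter, Finset.mem_Ioo] at hmem
    obtain ⟨⟨hb0, hbm⟩, hdif⟩ := hmem
    refine ⟨hb0, by omega, ?_, Or.inl ⟨hbm, hdif⟩⟩
    intro bh hlt hltm
    rcases Nat.eq_zero_or_pos bh with rfl | hbh0
    · exact hS _
    · by_contra hdif2
      have hmem2 : bh ∈ bset p m π τn i (alphaStar p m π t1 t2 hne τn i) := by
        rw [bset, Finset.mem_filter, Finset.mem_Ioo]
        exact ⟨⟨hbh0, hltm⟩, hdif2⟩
      rw [hαs] at hmem2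
      have hle : bStar p m π t1 t2 hne τn i ≤ bh := by
        rw [hbs]; exact Finset.min'_le _ bh hmem2
      omega
  · have hαs : alphaStar p m π t1 t2 hne τn i
        = (Finset.univ.filter (fun α => t1 α ≠ t2 α)).min'
          (hne.elim (fun α hα => ⟨α, Finset.mem_filter.mpr ⟨Finset.mem_univ α, hα⟩⟩)) := by
      rw [alphaStar, dif_neg h]
    have hbs : bStar p m π t1 t2 hne τn i = m (alphaStar p m π t1 t2 hne τn i) - 1 := by
      rw [bStar, dif_neg h]
    have htne : t1 (alphaStar p m π t1 t2 hne τn i) ≠ t2 (alphaStar p m π t1 t2 hne τn i) := by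
      have hmemt := Finset.min'_mem (Finset.univ.filter (fun α => t1 α ≠ t2 α))
        (hne.elim (fun α hα => ⟨α, Finset.mem_filter.mpr ⟨Finset.mem_univ α, hα⟩⟩))
      rw [Finset.mem_filter] at hmemt
      rw [hαs]
      exact hmemt.2
    have hm2 := hm (alphaStar p m π t1 t2 hne τn i)
    refine ⟨by omega, by omega, ?_, Or.inr ⟨hbs, htne⟩⟩
    intro bh hlt hltm
    rcases Nat.eq_zero_or_pos bh with rfl | hbh0
    · exact hS _
    · by_contra hdif2
      apply h
      refine ⟨alphaStar p m π t1 t2 hne τn i, ?_⟩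
      rw [aset, Finset.mem_filter]
      refine ⟨Finset.mem_univ _, ⟨bh, ?_⟩⟩
      rw [bset, Finset.mem_filter, Finset.mem_Ioo]
      exact ⟨⟨hbh0, hltm⟩, hdif2⟩

lemma sel_congr (hne : ∃ α, t1 α ≠ t2 α) (τn i j : ℕ)
    (hiff : ∀ (α : Fin k) bh, 0 < bh → bh < m α - 1 →
      ((dig p m (j % Nn p m) α (π α bh) = dig p m ((j + τn) % Nn p m) α (π α bh)) ↔
       (dig p m (i % Nn p m) α (π α bh) = dig p m ((i + τn) % Nn p m) α (π α bh)))) :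
    alphaStar p m π t1 t2 hne τn j = alphaStar p m π t1 t2 hne τn i ∧
    bStar p m π t1 t2 hne τn j = bStar p m π t1 t2 hne τn i := by
  have hbset : ∀ α, bset p m π τn j α = bset p m π τn i α := by
    intro α
    rw [bset, bset]
    apply Finset.filter_congr
    intro bh hbh
    rw [Finset.mem_Ioo] at hbh
    simp only [eq_iff_iff, ne_eq]
    rw [hiff α bh hbh.1 hbh.2]
  have haset : aset p m π τn j = aset p m π τn i := by
    rw [aset, aset]
    apply Finset.filter_congr
    intro α _
    rw [hbset α]
  have h1 : alphaStar p m π t1 t2 hne τn j = alphaStar p m π t1 t2 hne τn i := by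
    simp only [alphaStar, haset]
  refine ⟨h1, ?_⟩
  simp only [bStar, haset, hbset, h1]

end
end IGC
namespace IGC
section
variable {k : ℕ} (p m : Fin k → ℕ) (π : Fin k → ℕ → ℕ) (t1 t2 : ∀ α, Fin (p α))

lemma flip_dig_self (hp2 : ∀ α, 2 ≤ p α) (hne : ∃ α, t1 α ≠ t2 α) (τn i : ℕ) :
    flip p m π t1 t2 hne τn i
      (dig p m (i % Nn p m) (alphaStar p m π t1 t2 hne τn i)
        (rhoStar p m π t1 t2 hne τn i)) = i := by
  rw [flip, sd_self p m hp2, mul_comm]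
  exact Nat.div_add_mod i (Nn p m)

lemma flip_all (hp2 : ∀ α, 2 ≤ p α) (hm : ∀ α, 2 ≤ m α)
    (hπ : ∀ α, Set.BijOn (π α) (Set.Iio (m α - 1)) (Set.Iio (m α - 1)))
    (hne : ∃ α, t1 α ≠ t2 α) (τn i : ℕ)
    (hS : ∀ α, dig p m (i % Nn p m) α (π α 0) = dig p m ((i + τn) % Nn p m) α (π α 0))
    (d : ℕ) (hd : d < p (alphaStar p m π t1 t2 hne τn i))
    (L : ℕ) (hNL : Nn p m ∣ L) (hiL : i + τn < L) :
    (flip p m π t1 t2 hne τn i d) % Nn p m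
        = sd p m (i % Nn p m) (alphaStar p m π t1 t2 hne τn i)
            (rhoStar p m π t1 t2 hne τn i) d ∧
    (flip p m π t1 t2 hne τn i d) / Nn p m = i / Nn p m ∧
    (flip p m π t1 t2 hne τn i d + τn) % Nn p m
        = sd p m ((i + τn) % Nn p m) (alphaStar p m π t1 t2 hne τn i)
            (rhoStar p m π t1 t2 hne τn i) d ∧
    (flip p m π t1 t2 hne τn i d + τn) / Nn p m = (i + τn) / Nn p m ∧
    (∀ (α : Fin k) (pos : ℕ), dig p m ((flip p m π t1 t2 hne τn i d) % Nn p m) α pos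
        = if α = alphaStar p m π t1 t2 hne τn i ∧ pos = rhoStar p m π t1 t2 hne τn i
          then d else dig p m (i % Nn p m) α pos) ∧
    (∀ (α : Fin k) (pos : ℕ), dig p m ((flip p m π t1 t2 hne τn i d + τn) % Nn p m) α pos
        = if α = alphaStar p m π t1 t2 hne τn i ∧ pos = rhoStar p m π t1 t2 hne τn i
          then d else dig p m ((i + τn) % Nn p m) α pos) ∧
    (flip p m π t1 t2 hne τn i d + τn < L) ∧
    (∀ α, dig p m ((flip p m π t1 t2 hne τn i d) % Nn p m) α (π α 0)
        = dig p m ((flip p m π t1 t2 hne τn i d + τn) % Nn p m) α (π α 0)) ∧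
    alphaStar p m π t1 t2 hne τn (flip p m π t1 t2 hne τn i d)
        = alphaStar p m π t1 t2 hne τn i ∧
    bStar p m π t1 t2 hne τn (flip p m π t1 t2 hne τn i d)
        = bStar p m π t1 t2 hne τn i := by
  obtain ⟨hbs0, hbsle, hEQ, _⟩ := selSpec p m π t1 t2 hm hne τn i hS
  set αs := alphaStar p m π t1 t2 hne τn i with hαsdef
  set bs := bStar p m π t1 t2 hne τn i with hbsdef
  set ρ := rhoStar p m π t1 t2 hne τn i with hρdef
  set N := Nn p m with hNdef
  have hm2 := hm αs
  have hρm : bs - 1 < m αs - 1 := by omega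
  have hρ : ρ < m αs - 1 := by
    have := (hπ αs).mapsTo (show bs - 1 ∈ Set.Iio (m αs - 1) from hρm)
    exact this
  have hN : 0 < N := Nn_pos p m hp2
  have hsd1 : sd p m (i % N) αs ρ d < N :=
    sd_lt p m hp2 _ _ _ _ hρ hd (Nat.mod_lt _ hN)
  have hsd2 : sd p m ((i + τn) % N) αs ρ d < N :=
    sd_lt p m hp2 _ _ _ _ hρ hd (Nat.mod_lt _ hN)
  have h1 : (flip p m π t1 t2 hne τn i d) % N = sd p m (i % N) αs ρ d := by
    rw [flip, ← hαsdef, ← hρdef, ← hNdef, mul_comm (i / N) N, Nat.mul_add_mod, Nat.mod_eq_of_lt hsd1]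
  have h2 : (flip p m π t1 t2 hne τn i d) / N = i / N := by
    rw [flip, ← hαsdef, ← hρdef, ← hNdef, mul_comm (i / N) N, Nat.mul_add_div hN,
      Nat.div_eq_of_lt hsd1, add_zero]
  -- the shifted index
  have hu : dig p m ((i + τn) % N) αs ρ = dig p m (i % N) αs ρ :=
    (hEQ (bs - 1) (by omega) hρm).symm
  have ha := sd_add p m hp2 (i % N) αs ρ d
  have hb := sd_add p m hp2 ((i + τn) % N) αs ρ d
  rw [hu] at hb
  have hρpi : ρ = π αs (bs - 1) := rfl
  have h3 : flip p m π t1 t2 hne τn i d + τn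
      = ((i + τn) / N) * N + sd p m ((i + τn) % N) αs ρ d := by
    refine Nat.add_right_cancel (m := dig p m (i % N) αs ρ * (Qa p m αs * p αs ^ ρ)) ?_
    calc flip p m π t1 t2 hne τn i d + τn + dig p m (i % N) αs ρ * (Qa p m αs * p αs ^ ρ)
        = (i / N) * N + (sd p m (i % N) αs ρ d
            + dig p m (i % N) αs ρ * (Qa p m αs * p αs ^ ρ)) + τn := by
          rw [flip, ← hαsdef, ← hρdef, ← hNdef]; ring
      _ = (i / N) * N + (i % N + d * (Qa p m αs * p αs ^ ρ)) + τn := by rw [ha]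
      _ = (N * (i / N) + i % N) + τn + d * (Qa p m αs * p αs ^ ρ) := by ring
      _ = i + τn + d * (Qa p m αs * p αs ^ ρ) := by rw [Nat.div_add_mod]
      _ = (N * ((i + τn) / N) + (i + τn) % N) + d * (Qa p m αs * p αs ^ ρ) := by
          rw [Nat.div_add_mod]
      _ = ((i + τn) / N) * N + ((i + τn) % N + d * (Qa p m αs * p αs ^ ρ)) := by ring
      _ = ((i + τn) / N) * N + (sd p m ((i + τn) % N) αs ρ d
            + dig p m (i % N) αs ρ * (Qa p m αs * p αs ^ ρ)) := by rw [hb]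
      _ = ((i + τn) / N) * N + sd p m ((i + τn) % N) αs ρ d
            + dig p m (i % N) αs ρ * (Qa p m αs * p αs ^ ρ) := by ring
  have h4 : (flip p m π t1 t2 hne τn i d + τn) % N = sd p m ((i + τn) % N) αs ρ d := by
    rw [h3, mul_comm ((i + τn) / N) N, Nat.mul_add_mod, Nat.mod_eq_of_lt hsd2]
  have h5 : (flip p m π t1 t2 hne τn i d + τn) / N = (i + τn) / N := by
    rw [h3, mul_comm ((i + τn) / N) N, Nat.mul_add_div hN, Nat.div_eq_of_lt hsd2, add_zero]
  have hdig1 : ∀ (α : Fin k) (pos : ℕ),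
      dig p m ((flip p m π t1 t2 hne τn i d) % N) α pos
        = if α = αs ∧ pos = ρ then d else dig p m (i % N) α pos := by
    intro α pos
    rw [h1]
    by_cases hα : α = αs
    · subst hα
      by_cases hpos : pos = ρ
      · subst hpos
        rw [if_pos ⟨rfl, rfl⟩]
        exact dig_sd_same p m hp2 _ _ _ _ hρ hd
      · rw [if_neg (by tauto)]
        exact dig_sd_ne p m hp2 _ _ _ _ hρ hd pos hpos
    · rw [if_neg (by tauto)]
      exact dig_sd_block p m hp2 _ _ _ _ hρ hd α hα pos
  have hdig2 : ∀ (α : Fin k) (pos : ℕ),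
      dig p m ((flip p m π t1 t2 hne τn i d + τn) % N) α pos
        = if α = αs ∧ pos = ρ then d else dig p m ((i + τn) % N) α pos := by
    intro α pos
    rw [h4]
    by_cases hα : α = αs
    · subst hα
      by_cases hpos : pos = ρ
      · subst hpos
        rw [if_pos ⟨rfl, rfl⟩]
        exact dig_sd_same p m hp2 _ _ _ _ hρ hd
      · rw [if_neg (by tauto)]
        exact dig_sd_ne p m hp2 _ _ _ _ hρ hd pos hpos
    · rw [if_neg (by tauto)]
      exact dig_sd_block p m hp2 _ _ _ _ hρ hd α hα pos
  have h7 : flip p m π t1 t2 hne τn i d + τn < L := by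
    rw [h3]
    have hlt : (i + τn) / N < L / N := Nat.div_lt_div_of_lt_of_dvd hNL hiL
    calc ((i + τn) / N) * N + sd p m ((i + τn) % N) αs ρ d
        < ((i + τn) / N) * N + N := by omega
      _ = ((i + τn) / N + 1) * N := by ring
      _ ≤ (L / N) * N := Nat.mul_le_mul_right N (by omega)
      _ ≤ L := Nat.div_mul_le_self L N
  have h8 : ∀ α, dig p m ((flip p m π t1 t2 hne τn i d) % N) α (π α 0)
      = dig p m ((flip p m π t1 t2 hne τn i d + τn) % N) α (π α 0) := by
    intro α
    rw [hdig1, hdig2]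
    by_cases hc : α = αs ∧ π α 0 = ρ
    · rw [if_pos hc, if_pos hc]
    · rw [if_neg hc, if_neg hc]
      exact hS α
  have h9 := sel_congr p m π t1 t2 hne τn i (flip p m π t1 t2 hne τn i d) (by
    intro α bh hbh0 hbhm
    rw [hdig1, hdig2]
    by_cases hc : α = αs ∧ π α bh = ρ
    · rw [if_pos hc, if_pos hc]
      obtain ⟨hc1, hc2⟩ := hc
      rw [hc1] at hbhm hc2 ⊢
      have hbh : bh = bs - 1 :=
        (hπ αs).injOn (show bh ∈ Set.Iio (m αs - 1) from hbhm)
          (show bs - 1 ∈ Set.Iio (m αs - 1) from hρm) (hc2.trans hρpi)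
      exact iff_of_true rfl (by rw [hbh]; exact hEQ (bs - 1) (by omega) hρm)
    · rw [if_neg hc, if_neg hc])
  exact ⟨h1, h2, h4, h5, hdig1, hdig2, h7, h8, h9.1, h9.2⟩

end
end IGC
namespace IGC
section
variable {k : ℕ} (p m : Fin k → ℕ) (lam : ℕ) (π : Fin k → ℕ → ℕ)
  (c : Fin k → ℕ → ZMod lam) (c' : Fin k → ZMod lam) (t1 t2 : ∀ α, Fin (p α))

def sigInt (hne : ∃ α, t1 α ≠ t2 α) (τn y : ℕ) : ℤ :=
  (if bStar p m π t1 t2 hne τn y - 1 < m (alphaStar p m π t1 t2 hne τn y) - 2 then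
      ((dig p m (y % Nn p m) (alphaStar p m π t1 t2 hne τn y)
          (π (alphaStar p m π t1 t2 hne τn y) (bStar p m π t1 t2 hne τn y)) : ℤ)
        - (dig p m ((y + τn) % Nn p m) (alphaStar p m π t1 t2 hne τn y)
          (π (alphaStar p m π t1 t2 hne τn y) (bStar p m π t1 t2 hne τn y)) : ℤ))
    else 0)
  + (if bStar p m π t1 t2 hne τn y - 1 = m (alphaStar p m π t1 t2 hne τn y) - 2 then
      ((t1 (alphaStar p m π t1 t2 hne τn y) : ℤ) - (t2 (alphaStar p m π t1 t2 hne τn y) : ℤ))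
    else 0)

lemma sig_not_dvd (hp2 : ∀ α, 2 ≤ p α) (hm : ∀ α, 2 ≤ m α)
    (hne : ∃ α, t1 α ≠ t2 α) (τn y : ℕ)
    (hS : ∀ α, dig p m (y % Nn p m) α (π α 0) = dig p m ((y + τn) % Nn p m) α (π α 0)) :
    ¬ ((p (alphaStar p m π t1 t2 hne τn y) : ℤ) ∣ sigInt p m π t1 t2 hne τn y) := by
  obtain ⟨hbs0, hbsle, hEQ, hdisj⟩ := selSpec p m π t1 t2 hm hne τn y hS
  intro hdvd
  rcases hdisj with ⟨hlt, hdif⟩ | ⟨heq, htne⟩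
  · rw [sigInt, if_pos (by omega), if_neg (by omega), add_zero] at hdvd
    have h1 := dig_lt p m hp2 (y % Nn p m) (alphaStar p m π t1 t2 hne τn y)
      (π (alphaStar p m π t1 t2 hne τn y) (bStar p m π t1 t2 hne τn y))
    have h2 := dig_lt p m hp2 ((y + τn) % Nn p m) (alphaStar p m π t1 t2 hne τn y)
      (π (alphaStar p m π t1 t2 hne τn y) (bStar p m π t1 t2 hne τn y))
    have h0 := Int.eq_zero_of_abs_lt_dvd hdvd (by rw [abs_lt]; constructor <;> omega)
    apply hdif
    omega
  · rw [sigInt, if_neg (by omega), if_pos (by omega), zero_add] at hdvd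
    have h1 := (t1 (alphaStar p m π t1 t2 hne τn y)).isLt
    have h2 := (t2 (alphaStar p m π t1 t2 hne τn y)).isLt
    have h0 := Int.eq_zero_of_abs_lt_dvd hdvd (by rw [abs_lt]; constructor <;> omega)
    apply htne
    have hv : (t1 (alphaStar p m π t1 t2 hne τn y) : ℕ)
        = (t2 (alphaStar p m π t1 t2 hne τn y) : ℕ) := by omega
    exact Fin.ext hv

lemma phase (hp2 : ∀ α, 2 ≤ p α) (hm : ∀ α, 2 ≤ m α)
    (hπ : ∀ α, Set.BijOn (π α) (Set.Iio (m α - 1)) (Set.Iio (m α - 1)))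
    (s1 s2 : ∀ α, Fin (p α))
    (hne : ∃ α, t1 α ≠ t2 α) (τn y : ℕ)
    (hS : ∀ α, dig p m (y % Nn p m) α (π α 0) = dig p m ((y + τn) % Nn p m) α (π α 0))
    (d : ℕ) (hd : d < p (alphaStar p m π t1 t2 hne τn y))
    (L : ℕ) (hNL : Nn p m ∣ L) (hyL : y + τn < L)
    (hy0 : dig p m (y % Nn p m) (alphaStar p m π t1 t2 hne τn y)
        (rhoStar p m π t1 t2 hne τn y) = 0)
    (hy0' : dig p m ((y + τn) % Nn p m) (alphaStar p m π t1 t2 hne τn y)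
        (rhoStar p m π t1 t2 hne τn y) = 0) :
    GF p m lam π c c' t1 s1 ((flip p m π t1 t2 hne τn y d) % Nn p m)
        ((flip p m π t1 t2 hne τn y d) / Nn p m)
      - GF p m lam π c c' t2 s2 ((flip p m π t1 t2 hne τn y d + τn) % Nn p m)
        ((flip p m π t1 t2 hne τn y d + τn) / Nn p m)
    = GF p m lam π c c' t1 s1 (y % Nn p m) (y / Nn p m)
      - GF p m lam π c c' t2 s2 ((y + τn) % Nn p m) ((y + τn) / Nn p m)
      + (((lam / p (alphaStar p m π t1 t2 hne τn y) : ℕ) * d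
            * sigInt p m π t1 t2 hne τn y : ℤ) : ZMod lam) := by
  obtain ⟨hbs0, hbsle, hEQ, hdisj⟩ := selSpec p m π t1 t2 hm hne τn y hS
  obtain ⟨F1, F2, F3, F4, _⟩ :=
    flip_all p m π t1 t2 hp2 hm hπ hne τn y hS d hd L hNL hyL
  set αs := alphaStar p m π t1 t2 hne τn y with hαsdef
  set bs := bStar p m π t1 t2 hne τn y with hbsdef
  set N := Nn p m with hNdef
  have hm2 := hm αs
  have hρpi : rhoStar p m π t1 t2 hne τn y = π αs (bs - 1) := rfl
  rw [hρpi] at F1 F3 hy0 hy0'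
  have hb2 : bs - 1 ≤ m αs - 2 := by omega
  have G1 := GF_sd p m lam π c c' hp2 hm hπ t1 s1 αs (bs - 1) hb2 (y % N) d hd hy0 (y / N)
  have G2 := GF_sd p m lam π c c' hp2 hm hπ t2 s2 αs (bs - 1) hb2 ((y + τn) % N) d hd hy0'
      ((y + τn) / N)
  rw [F1, F2, F3, F4, G1, G2]
  -- the `if 1 ≤ bs - 1` terms agree between y and y + τn
  have hw : (if 1 ≤ bs - 1 then (dig p m (y % N) αs (π αs (bs - 1 - 1)) : ZMod lam) else 0)
      = (if 1 ≤ bs - 1 then (dig p m ((y + τn) % N) αs (π αs (bs - 1 - 1)) : ZMod lam)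
          else 0) := by
    by_cases hb1 : 1 ≤ bs - 1
    · rw [if_pos hb1, if_pos hb1, hEQ (bs - 1 - 1) (by omega) (by omega)]
    · rw [if_neg hb1, if_neg hb1]
  rw [hw]
  rw [sigInt, ← hαsdef, ← hbsdef, ← hNdef]
  set q0 : ℕ := lam / p αs with hq0def
  by_cases hc1 : bs - 1 < m αs - 2
  · have hc2 : ¬ (bs - 1 = m αs - 2) := by omega
    rw [if_pos hc1, if_pos hc1, if_pos hc1, if_neg hc2, if_neg hc2, if_neg hc2]
    have hbsp : bs - 1 + 1 = bs := by omega
    rw [hbsp]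
    push_cast
    ring
  · have hc2 : bs - 1 = m αs - 2 := by omega
    rw [if_neg hc1, if_neg hc1, if_neg hc1, if_pos hc2, if_pos hc2, if_pos hc2]
    push_cast
    ring

end
end IGC
namespace IGC
section
variable {k : ℕ} (p m : Fin k → ℕ) (lam : ℕ) (π : Fin k → ℕ → ℕ)
  (c : Fin k → ℕ → ZMod lam) (c' : Fin k → ZMod lam) (t1 t2 : ∀ α, Fin (p α))

lemma fiber_zero (hp2 : ∀ α, 2 ≤ p α) (hm : ∀ α, 2 ≤ m α) (hlam : 0 < lam)
    (hdvd : ∀ α, p α ∣ lam)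
    (hπ : ∀ α, Set.BijOn (π α) (Set.Iio (m α - 1)) (Set.Iio (m α - 1)))
    (s1 s2 : ∀ α, Fin (p α)) (hne : ∃ α, t1 α ≠ t2 α) (τn L : ℕ) (hNL : Nn p m ∣ L) :
    ∑ i ∈ (range (L - τn)).filter
        (fun i => ∀ α, dig p m (i % Nn p m) α (π α 0)
          = dig p m ((i + τn) % Nn p m) α (π α 0)),
      chi lam (GF p m lam π c c' t1 s1 (i % Nn p m) (i / Nn p m)
        - GF p m lam π c c' t2 s2 ((i + τn) % Nn p m) ((i + τn) / Nn p m)) = 0 := by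
  classical
  set N := Nn p m with hNdef
  set S := (range (L - τn)).filter
      (fun i => ∀ α, dig p m (i % N) α (π α 0) = dig p m ((i + τn) % N) α (π α 0)) with hSdef
  set cmap := fun i => flip p m π t1 t2 hne τn i 0 with hcmapdef
  have hmemS : ∀ i ∈ S, i + τn < L ∧
      (∀ α, dig p m (i % N) α (π α 0) = dig p m ((i + τn) % N) α (π α 0)) := by
    intro i hi
    rw [hSdef, Finset.mem_filter, Finset.mem_range] at hi
    exact ⟨by omega, hi.2⟩
  have hflipS : ∀ i ∈ S, ∀ d, d < p (alphaStar p m π t1 t2 hne τn i) →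
      flip p m π t1 t2 hne τn i d ∈ S := by
    intro i hi d hd
    obtain ⟨hiL, hPeq⟩ := hmemS i hi
    obtain ⟨_, _, _, _, _, _, h7, h8, _, _⟩ :=
      flip_all p m π t1 t2 hp2 hm hπ hne τn i hPeq d hd L hNL hiL
    rw [hSdef, Finset.mem_filter, Finset.mem_range]
    exact ⟨by omega, h8⟩
  rw [← Finset.sum_fiberwise_of_maps_to (g := cmap) (t := S.image cmap)
    (fun x hx => Finset.mem_image_of_mem cmap hx)]
  apply Finset.sum_eq_zero
  intro y hy
  obtain ⟨i0, hi0S, hyc⟩ := Finset.mem_image.mp hy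
  obtain ⟨hi0L, hPeq0⟩ := hmemS i0 hi0S
  have hp0 : 0 < p (alphaStar p m π t1 t2 hne τn i0) :=
    Nat.lt_of_lt_of_le (by norm_num) (hp2 _)
  obtain ⟨F01, F02, F03, F04, F05, F06, F07, F08, F09, F10⟩ :=
    flip_all p m π t1 t2 hp2 hm hπ hne τn i0 hPeq0 0 hp0 L hNL hi0L
  have hyS : y ∈ S := by rw [← hyc]; exact hflipS i0 hi0S 0 hp0
  obtain ⟨hyL, hPeqy⟩ := hmemS y hyS
  have hαy : alphaStar p m π t1 t2 hne τn y = alphaStar p m π t1 t2 hne τn i0 := by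
    rw [← hyc]; exact F09
  have hby : bStar p m π t1 t2 hne τn y = bStar p m π t1 t2 hne τn i0 := by
    rw [← hyc]; exact F10
  have hρy : rhoStar p m π t1 t2 hne τn y = rhoStar p m π t1 t2 hne τn i0 := by
    rw [rhoStar, rhoStar, hαy, hby]
  -- digit of y at the active position is zero
  obtain ⟨hbs00, hbsle0, _, _⟩ := selSpec p m π t1 t2 hm hne τn i0 hPeq0
  have hm20 := hm (alphaStar p m π t1 t2 hne τn i0)
  have hρm0 : bStar p m π t1 t2 hne τn i0 - 1
      < m (alphaStar p m π t1 t2 hne τn i0) - 1 := by omega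
  have hρ0 : rhoStar p m π t1 t2 hne τn i0 < m (alphaStar p m π t1 t2 hne τn i0) - 1 :=
    (hπ _).mapsTo (show _ ∈ Set.Iio _ from hρm0)
  have hy0 : dig p m (y % N) (alphaStar p m π t1 t2 hne τn y)
      (rhoStar p m π t1 t2 hne τn y) = 0 := by
    rw [hαy, hρy, ← hyc, F01]
    exact dig_sd_same p m hp2 _ _ _ _ hρ0 hp0
  have hy0' : dig p m ((y + τn) % N) (alphaStar p m π t1 t2 hne τn y)
      (rhoStar p m π t1 t2 hne τn y) = 0 := by
    rw [hαy, hρy, ← hyc, F03]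
    exact dig_sd_same p m hp2 _ _ _ _ hρ0 hp0
  -- facts about flips of y
  obtain ⟨hbs0y, hbsley, _, _⟩ := selSpec p m π t1 t2 hm hne τn y hPeqy
  have hm2y := hm (alphaStar p m π t1 t2 hne τn y)
  have hρmy : bStar p m π t1 t2 hne τn y - 1
      < m (alphaStar p m π t1 t2 hne τn y) - 1 := by omega
  have hρvy : rhoStar p m π t1 t2 hne τn y < m (alphaStar p m π t1 t2 hne τn y) - 1 :=
    (hπ _).mapsTo (show _ ∈ Set.Iio _ from hρmy)
  -- the fiber over y is the image of the flips of y
  have hfib : S.filter (fun i => cmap i = y)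
      = (range (p (alphaStar p m π t1 t2 hne τn y))).image
          (fun d => flip p m π t1 t2 hne τn y d) := by
    ext i
    simp only [Finset.mem_filter, Finset.mem_image, Finset.mem_range]
    constructor
    · rintro ⟨hiS, hci⟩
      obtain ⟨hiL, hPeqi⟩ := hmemS i hiS
      have hpi0 : 0 < p (alphaStar p m π t1 t2 hne τn i) :=
        Nat.lt_of_lt_of_le (by norm_num) (hp2 _)
      obtain ⟨G1, G2, G3, G4, G5, G6, G7, G8, G9, G10⟩ :=
        flip_all p m π t1 t2 hp2 hm hπ hne τn i hPeqi 0 hpi0 L hNL hiL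
      have hαi : alphaStar p m π t1 t2 hne τn y = alphaStar p m π t1 t2 hne τn i := by
        rw [← hci]; exact G9
      have hbi : bStar p m π t1 t2 hne τn y = bStar p m π t1 t2 hne τn i := by
        rw [← hci]; exact G10
      have hρi : rhoStar p m π t1 t2 hne τn y = rhoStar p m π t1 t2 hne τn i := by
        rw [rhoStar, rhoStar, hαi, hbi]
      obtain ⟨_, hbsleI, _, _⟩ := selSpec p m π t1 t2 hm hne τn i hPeqi
      have hbs0I : 0 < bStar p m π t1 t2 hne τn i :=
        (selSpec p m π t1 t2 hm hne τn i hPeqi).1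
      have hm2I := hm (alphaStar p m π t1 t2 hne τn i)
      have hρI : rhoStar p m π t1 t2 hne τn i < m (alphaStar p m π t1 t2 hne τn i) - 1 :=
        (hπ _).mapsTo (Set.mem_Iio.mpr (show bStar p m π t1 t2 hne τn i - 1
          < m (alphaStar p m π t1 t2 hne τn i) - 1 by omega))
      refine ⟨dig p m (i % N) (alphaStar p m π t1 t2 hne τn i)
          (rhoStar p m π t1 t2 hne τn i), ?_, ?_⟩
      · rw [hαi]; exact dig_lt p m hp2 _ _ _
      · rw [flip, hαi, hρi, ← hci]
        show flip p m π t1 t2 hne τn i 0 / N * N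
            + sd p m (flip p m π t1 t2 hne τn i 0 % N) (alphaStar p m π t1 t2 hne τn i)
              (rhoStar p m π t1 t2 hne τn i)
              (dig p m (i % N) (alphaStar p m π t1 t2 hne τn i)
                (rhoStar p m π t1 t2 hne τn i)) = i
        rw [G2, G1, sd_sd p m hp2 _ _ _ _ _ hρI hpi0, sd_self p m hp2, mul_comm]
        exact Nat.div_add_mod i N
    · rintro ⟨d, hd, rfl⟩
      refine ⟨hflipS y hyS d hd, ?_⟩
      obtain ⟨K1, K2, K3, K4, K5, K6, K7, K8, K9, K10⟩ :=
        flip_all p m π t1 t2 hp2 hm hπ hne τn y hPeqy d hd L hNL hyL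
      have hρf : rhoStar p m π t1 t2 hne τn (flip p m π t1 t2 hne τn y d)
          = rhoStar p m π t1 t2 hne τn y := by rw [rhoStar, rhoStar, K9, K10]
      show flip p m π t1 t2 hne τn (flip p m π t1 t2 hne τn y d) 0 = y
      rw [flip, K9, hρf, K1, K2, sd_sd p m hp2 _ _ _ _ _ hρvy hd, ← hy0,
        sd_self p m hp2, mul_comm]
      exact Nat.div_add_mod y N
  rw [hfib, Finset.sum_image (by
    intro d1 h1 d2 h2 heq
    obtain ⟨K1, _⟩ := flip_all p m π t1 t2 hp2 hm hπ hne τn y hPeqy d1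
      (Finset.mem_range.mp h1) L hNL hyL
    obtain ⟨K1', _⟩ := flip_all p m π t1 t2 hp2 hm hπ hne τn y hPeqy d2
      (Finset.mem_range.mp h2) L hNL hyL
    have : dig p m ((flip p m π t1 t2 hne τn y d1) % N)
        (alphaStar p m π t1 t2 hne τn y) (rhoStar p m π t1 t2 hne τn y) = d1 := by
      rw [K1]; exact dig_sd_same p m hp2 _ _ _ _ hρvy (Finset.mem_range.mp h1)
    have h2' : dig p m ((flip p m π t1 t2 hne τn y d2) % N)
        (alphaStar p m π t1 t2 hne τn y) (rhoStar p m π t1 t2 hne τn y) = d2 := by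
      rw [K1']; exact dig_sd_same p m hp2 _ _ _ _ hρvy (Finset.mem_range.mp h2)
    rw [← this, ← h2', show flip p m π t1 t2 hne τn y d1 = flip p m π t1 t2 hne τn y d2 from heq])]
  have hph : ∀ d ∈ range (p (alphaStar p m π t1 t2 hne τn y)),
      chi lam (GF p m lam π c c' t1 s1 ((flip p m π t1 t2 hne τn y d) % N)
          ((flip p m π t1 t2 hne τn y d) / N)
        - GF p m lam π c c' t2 s2 ((flip p m π t1 t2 hne τn y d + τn) % N)
          ((flip p m π t1 t2 hne τn y d + τn) / N))
      = chi lam ((GF p m lam π c c' t1 s1 (y % N) (y / N)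
          - GF p m lam π c c' t2 s2 ((y + τn) % N) ((y + τn) / N))
        + (((lam / p (alphaStar p m π t1 t2 hne τn y) : ℕ) * d
            * sigInt p m π t1 t2 hne τn y : ℤ) : ZMod lam)) := by
    intro d hd
    rw [phase p m lam π c c' t1 t2 hp2 hm hπ s1 s2 hne τn y hPeqy d
      (Finset.mem_range.mp hd) L hNL hyL hy0 hy0']
  rw [Finset.sum_congr rfl hph]
  exact chi_geom lam (p (alphaStar p m π t1 t2 hne τn y)) hlam (hdvd _)
    (hp2 _) _ (sig_not_dvd p m π t1 t2 hp2 hm hne τn y hPeqy) _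

end
end IGC
namespace IGC
section
variable {k : ℕ} (p m : Fin k → ℕ) (lam : ℕ) (π : Fin k → ℕ → ℕ)
  (c : Fin k → ℕ → ZMod lam) (c' : Fin k → ZMod lam)

lemma aFun_decomp (s t γ : ∀ α, Fin (p α)) (j : ℕ) :
    aFun p m lam π c c' s t γ j
      = GF p m lam π c c' t s (j % Nn p m) (j / Nn p m)
        + ∑ α, ((lam / p α : ℕ) : ZMod lam) * (dig p m (j % Nn p m) α (π α 0) : ZMod lam)
            * ((γ α : ℕ) : ZMod lam) := by
  unfold aFun RFun GF sTerm Nn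
  ring

lemma term_eq (hlam : 0 < lam) (g h : ℕ → ZMod lam) (j j' : ℕ) :
    seqC lam g j * (starRingEnd ℂ) (seqC lam h j') = chi lam (g j - h j') := by
  have h1 : seqC lam g j = chi lam (g j) := rfl
  have h2 : seqC lam h j' = chi lam (h j') := rfl
  rw [h1, h2, conj_chi lam hlam, ← chi_add lam hlam, sub_eq_add_neg]

lemma gamma_sum (hp2 : ∀ α, 2 ≤ p α) (hlam : 0 < lam) (hdvd : ∀ α, p α ∣ lam)
    (s1 s2 t1 t2 : ∀ α, Fin (p α)) (τn i : ℕ) :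
    ∑ γ : ∀ α, Fin (p α), seqC lam (aFun p m lam π c c' s1 t1 γ) i
        * (starRingEnd ℂ) (seqC lam (aFun p m lam π c c' s2 t2 γ) (i + τn))
    = if ∀ α, dig p m (i % Nn p m) α (π α 0) = dig p m ((i + τn) % Nn p m) α (π α 0)
      then ((∏ α, p α : ℕ) : ℂ)
        * chi lam (GF p m lam π c c' t1 s1 (i % Nn p m) (i / Nn p m)
            - GF p m lam π c c' t2 s2 ((i + τn) % Nn p m) ((i + τn) / Nn p m))
      else 0 := by
  classical
  have hterm : ∀ γ : ∀ α, Fin (p α),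
      seqC lam (aFun p m lam π c c' s1 t1 γ) i
        * (starRingEnd ℂ) (seqC lam (aFun p m lam π c c' s2 t2 γ) (i + τn))
      = chi lam (GF p m lam π c c' t1 s1 (i % Nn p m) (i / Nn p m)
            - GF p m lam π c c' t2 s2 ((i + τn) % Nn p m) ((i + τn) / Nn p m)) * ∏ α,
          chi lam ((((lam / p α : ℕ) : ZMod lam)
              * (dig p m (i % Nn p m) α (π α 0) : ZMod lam)
            - ((lam / p α : ℕ) : ZMod lam)
              * (dig p m ((i + τn) % Nn p m) α (π α 0) : ZMod lam))
            * ((γ α : ℕ) : ZMod lam)) := by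
    intro γ
    rw [term_eq lam hlam, aFun_decomp, aFun_decomp, ← chi_sum lam hlam, ← chi_add lam hlam]
    congr 1
    have hsum : (∑ α, ((((lam / p α : ℕ) : ZMod lam)
              * (dig p m (i % Nn p m) α (π α 0) : ZMod lam)
            - ((lam / p α : ℕ) : ZMod lam)
              * (dig p m ((i + τn) % Nn p m) α (π α 0) : ZMod lam))
            * ((γ α : ℕ) : ZMod lam)))
        = (∑ α, ((lam / p α : ℕ) : ZMod lam) * (dig p m (i % Nn p m) α (π α 0) : ZMod lam)
            * ((γ α : ℕ) : ZMod lam))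
          - ∑ α, ((lam / p α : ℕ) : ZMod lam)
            * (dig p m ((i + τn) % Nn p m) α (π α 0) : ZMod lam) * ((γ α : ℕ) : ZMod lam) := by
      rw [← Finset.sum_sub_distrib]
      exact Finset.sum_congr rfl (fun α _ => by ring)
    rw [hsum]
    ring
  rw [Finset.sum_congr rfl (fun γ _ => hterm γ), ← Finset.mul_sum]
  rw [← Fintype.piFinset_univ, ← Finset.prod_univ_sum
    (t := fun α : Fin k => (Finset.univ : Finset (Fin (p α))))
    (f := fun (α : Fin k) (g : Fin (p α)) => chi lam ((((lam / p α : ℕ) : ZMod lam)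
              * (dig p m (i % Nn p m) α (π α 0) : ZMod lam)
            - ((lam / p α : ℕ) : ZMod lam)
              * (dig p m ((i + τn) % Nn p m) α (π α 0) : ZMod lam))
            * ((g : ℕ) : ZMod lam)))]
  by_cases hPeq : ∀ α, dig p m (i % Nn p m) α (π α 0) = dig p m ((i + τn) % Nn p m) α (π α 0)
  · rw [if_pos hPeq]
    have hfac : ∀ α : Fin k, (∑ g : Fin (p α),
        chi lam ((((lam / p α : ℕ) : ZMod lam) * (dig p m (i % Nn p m) α (π α 0) : ZMod lam)
          - ((lam / p α : ℕ) : ZMod lam) * (dig p m ((i + τn) % Nn p m) α (π α 0) : ZMod lam))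
          * ((g : ℕ) : ZMod lam))) = ((p α : ℕ) : ℂ) := by
      intro α
      have : (((lam / p α : ℕ) : ZMod lam) * (dig p m (i % Nn p m) α (π α 0) : ZMod lam)
          - ((lam / p α : ℕ) : ZMod lam) * (dig p m ((i + τn) % Nn p m) α (π α 0) : ZMod lam)) = 0 := by
        rw [hPeq α]; ring
      simp [this, chi_zero lam hlam]
    rw [Finset.prod_congr rfl (fun α _ => hfac α), ← Nat.cast_prod]
    ring
  · rw [if_neg hPeq]
    push_neg at hPeq
    obtain ⟨α0, hα0⟩ := hPeq
    rw [Finset.prod_eq_zero (Finset.mem_univ α0), mul_zero]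
    set d1 := dig p m (i % Nn p m) α0 (π α0 0) with hd1
    set d2 := dig p m ((i + τn) % Nn p m) α0 (π α0 0) with hd2
    set q0 := lam / p α0 with hq0
    have hcast : ∀ g : ℕ,
        ((((q0 : ℕ) : ZMod lam) * (d1 : ZMod lam) - ((q0 : ℕ) : ZMod lam) * (d2 : ZMod lam))
          * ((g : ℕ) : ZMod lam))
        = (0 : ZMod lam) + (((q0 : ℕ) * g * ((d1 : ℤ) - (d2 : ℤ)) : ℤ) : ZMod lam) := by
      intro g
      push_cast
      ring
    have hre : (∑ g : Fin (p α0),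
        chi lam ((((q0 : ℕ) : ZMod lam) * (d1 : ZMod lam)
          - ((q0 : ℕ) : ZMod lam) * (d2 : ZMod lam)) * ((g : ℕ) : ZMod lam)))
        = ∑ g ∈ range (p α0),
            chi lam ((0 : ZMod lam) + (((q0 : ℕ) * g * ((d1 : ℤ) - (d2 : ℤ)) : ℤ) : ZMod lam)) := by
      rw [← Fin.sum_univ_eq_sum_range (fun g =>
        chi lam ((0 : ZMod lam) + (((q0 : ℕ) * g * ((d1 : ℤ) - (d2 : ℤ)) : ℤ) : ZMod lam)))]
      exact Finset.sum_congr rfl (fun g _ => by rw [hcast])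
    rw [hre, hq0]
    apply chi_geom lam (p α0) hlam (hdvd α0) (hp2 α0)
    have h1 : d1 < p α0 := dig_lt p m hp2 _ _ _
    have h2 : d2 < p α0 := dig_lt p m hp2 _ _ _
    intro hdvd2
    have h0 := Int.eq_zero_of_abs_lt_dvd hdvd2 (by rw [abs_lt]; constructor <;> omega)
    apply hα0
    omega

end
end IGC
/-- inter-group zero correlation beyond the ZCZ: for
`β·N ≤ τ < (β+1)·N` with `N = ∏_α p_α^{m_α-1}` and `1 ≤ β ≤ ∏_α p_α − 1`, and
`t1 ≠ t2`, the ACCF of the IGC codes `C_{s1,t1}, C_{s2,t2}` vanishes for all `s1, s2`. -/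
theorem igc_intergroup (k : ℕ) (p m : Fin k → ℕ) (hp : ∀ α, (p α).Prime)
    (hm : ∀ α, 2 ≤ m α) (lam : ℕ) (hlam : 0 < lam) (hdvd : ∀ α, p α ∣ lam)
    (π : Fin k → ℕ → ℕ)
    (hπ : ∀ α, Set.BijOn (π α) (Set.Iio (m α - 1)) (Set.Iio (m α - 1)))
    (c : Fin k → ℕ → ZMod lam) (c' : Fin k → ZMod lam)
    (s1 s2 t1 t2 : ∀ α, Fin (p α)) (ht : t1 ≠ t2)
    (β : ℕ) (hβ1 : 1 ≤ β) (hβ2 : β < ∏ α, p α)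
    (τ : ℤ) (hτ1 : ((β * ∏ α, p α ^ (m α - 1) : ℕ) : ℤ) ≤ τ)
    (hτ2 : τ < (((β + 1) * ∏ α, p α ^ (m α - 1) : ℕ) : ℤ)) :
    ∑ γ : ∀ α, Fin (p α),
        accf (∏ α, p α ^ (m α)) (seqC lam (aFun p m lam π c c' s1 t1 γ))
          (seqC lam (aFun p m lam π c c' s2 t2 γ)) τ = 0 := by
  classical
  have hp2 : ∀ α, 2 ≤ p α := fun α => (hp α).two_le
  have hne : ∃ α, t1 α ≠ t2 α := by
    by_contra hcon
    push_neg at hcon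
    exact ht (funext hcon)
  have hNeq : IGC.Nn p m = ∏ α, p α ^ (m α - 1) := rfl
  have hNpos : 0 < IGC.Nn p m := IGC.Nn_pos p m hp2
  have hPpos : 0 < ∏ α, p α :=
    Finset.prod_pos (fun α _ => Nat.lt_of_lt_of_le (by norm_num) (hp2 α))
  have hLP : (∏ α, p α ^ (m α)) = (∏ α, p α) * IGC.Nn p m := by
    rw [IGC.Nn, ← Finset.prod_mul_distrib]
    apply Finset.prod_congr rfl
    intro α _
    have h2 := hm α
    rw [← pow_succ']
    congr 1
    omega
  have hτ0 : 0 ≤ τ := le_trans (by positivity) hτ1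
  have hτeq : (τ : ℤ) = (τ.toNat : ℤ) := (Int.toNat_of_nonneg hτ0).symm
  have hτ2n : τ.toNat < (β + 1) * IGC.Nn p m := by
    have := hτ2
    rw [hτeq] at this
    exact_mod_cast this
  have hτL : τ.toNat < ∏ α, p α ^ (m α) := by
    rw [hLP]
    calc τ.toNat < (β + 1) * IGC.Nn p m := hτ2n
      _ ≤ (∏ α, p α) * IGC.Nn p m := Nat.mul_le_mul_right _ (by omega)
  have hcond : 0 ≤ τ ∧ τ < ((∏ α, p α ^ (m α) : ℕ) : ℤ) := by
    refine ⟨hτ0, ?_⟩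
    rw [hτeq]
    exact_mod_cast hτL
  have haccf : ∀ γ : ∀ α, Fin (p α),
      accf (∏ α, p α ^ (m α)) (seqC lam (aFun p m lam π c c' s1 t1 γ))
        (seqC lam (aFun p m lam π c c' s2 t2 γ)) τ
      = ∑ i ∈ range ((∏ α, p α ^ (m α)) - τ.toNat),
          seqC lam (aFun p m lam π c c' s1 t1 γ) i
            * (starRingEnd ℂ) (seqC lam (aFun p m lam π c c' s2 t2 γ) (i + τ.toNat)) := by
    intro γ
    rw [accf, if_pos hcond]
  rw [Finset.sum_congr rfl (fun γ _ => haccf γ), Finset.sum_comm]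
  rw [Finset.sum_congr rfl (fun i _ =>
    IGC.gamma_sum p m lam π c c' hp2 hlam hdvd s1 s2 t1 t2 τ.toNat i)]
  rw [Finset.sum_ite, Finset.sum_const_zero, add_zero, ← Finset.mul_sum]
  rw [IGC.fiber_zero p m lam π c c' t1 t2 hp2 hm hlam hdvd hπ s1 s2 hne τ.toNat
    (∏ α, p α ^ (m α)) (by rw [hLP]; exact Dvd.intro _ (mul_comm _ _)), mul_zero]
end

section
/- With the setup of Theorem 2, for each fixed γ and each 0 < τ_1 < 2^m, the 2-D autocorrelation of the single array X^γ at shift (τ_1, 0) vanishes: A(X^γ)(τ_1, 0) = 0. (Column-direction Golay complementarity of each individual array.) -/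
open Finset

/-- 2-D aperiodic cross-correlation of `L1 × L2` complex arrays at shift `(τ1, τ2)`. -/
noncomputable def accf2 (L1 L2 : ℕ) (X Y : ℕ → ℕ → ℂ) (τ1 τ2 : ℤ) : ℂ :=
  if 0 ≤ τ1 then
    if 0 ≤ τ2 then
      ∑ i ∈ range (L1 - τ1.toNat), ∑ j ∈ range (L2 - τ2.toNat),
        X i j * (starRingEnd ℂ) (Y (i + τ1.toNat) (j + τ2.toNat))
    else
      ∑ i ∈ range (L1 - τ1.toNat), ∑ j ∈ range (L2 - (-τ2).toNat),
        X i (j + (-τ2).toNat) * (starRingEnd ℂ) (Y (i + τ1.toNat) j)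
  else
    if 0 ≤ τ2 then
      ∑ i ∈ range (L1 - (-τ1).toNat), ∑ j ∈ range (L2 - τ2.toNat),
        X (i + (-τ1).toNat) j * (starRingEnd ℂ) (Y i (j + τ2.toNat))
    else
      ∑ i ∈ range (L1 - (-τ1).toNat), ∑ j ∈ range (L2 - (-τ2).toNat),
        X (i + (-τ1).toNat) (j + (-τ2).toNat) * (starRingEnd ℂ) (Y i j)

/-- The Boolean-function part `a(x) = (λ/2)Σ x_{π(β)}x_{π(β+1)} + Σ g_β x_β + e`
evaluated on the binary digits of `i`. -/
def aBool (lam mB : ℕ) (πB : ℕ → ℕ) (g : ℕ → ZMod lam) (e : ZMod lam) (i : ℕ) : ZMod lam :=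
  ((lam / 2 : ℕ) : ZMod lam) *
      ∑ β ∈ range (mB - 1), (bit i (πB β) : ZMod lam) * (bit i (πB (β + 1)) : ZMod lam)
    + ∑ β ∈ range mB, g β * (bit i β : ZMod lam) + e

/-- The Golay mate `b(x) = a(x) + (λ/2)x_{π(1)} + (e' − e)`. -/
def bBool (lam mB : ℕ) (πB : ℕ → ℕ) (g : ℕ → ZMod lam) (e' : ZMod lam) (i : ℕ) : ZMod lam :=
  aBool lam mB πB g e' i + ((lam / 2 : ℕ) : ZMod lam) * (bit i (πB 0) : ZMod lam)

/-- The function `F_d^{γ,s1,s2,t1,t2} = (1−v'')(a_{s1,t1}^γ + a(d)) + v''(a_{s2,t2}^γ + b(d))`,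
giving the `(i,j)` entry of the `ZMod λ`-valued array (row `i ↔ d`, column
`j < 2∏_α p_α^{m_α}` with the `Z_2` coordinate `v'' = j / ∏_α p_α^{m_α}` outermost). -/
def FFun {k : ℕ} (p m : Fin k → ℕ) (lam : ℕ) (π : Fin k → ℕ → ℕ)
    (c : Fin k → ℕ → ZMod lam) (c' : Fin k → ZMod lam)
    (mB : ℕ) (πB : ℕ → ℕ) (g : ℕ → ZMod lam) (e e' : ZMod lam)
    (s1 s2 t1 t2 γ : ∀ α, Fin (p α)) (i j : ℕ) : ZMod lam :=
  (1 - ((j / ∏ α, p α ^ (m α) : ℕ) : ZMod lam)) *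
      (aFun p m lam π c c' s1 t1 γ (j % ∏ α, p α ^ (m α)) + aBool lam mB πB g e i)
    + ((j / ∏ α, p α ^ (m α) : ℕ) : ZMod lam) *
      (aFun p m lam π c c' s2 t2 γ (j % ∏ α, p α ^ (m α)) + bBool lam mB πB g e' i)

/-- The complex array `X^γ = Ψ(K^γ)` of size `2^{mB} × 2∏_α p_α^{m_α}`. -/
noncomputable def XArr {k : ℕ} (p m : Fin k → ℕ) (lam : ℕ) (π : Fin k → ℕ → ℕ)
    (c : Fin k → ℕ → ZMod lam) (c' : Fin k → ZMod lam)
    (mB : ℕ) (πB : ℕ → ℕ) (g : ℕ → ZMod lam) (e e' : ZMod lam)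
    (s1 s2 t1 t2 γ : ∀ α, Fin (p α)) : ℕ → ℕ → ℂ :=
  fun i j => Complex.exp (2 * Real.pi * Complex.I *
    (((FFun p m lam π c c' mB πB g e e' s1 s2 t1 t2 γ i j).val : ℕ) : ℂ) / (lam : ℂ))

noncomputable def ome (lam : ℕ) (x : ZMod lam) : ℂ :=
  Complex.exp (2 * Real.pi * Complex.I * ((x.val : ℕ) : ℂ) / (lam : ℂ))

lemma ome_eq_pow (lam : ℕ) (x : ZMod lam) :
    ome lam x = Complex.exp (2 * Real.pi * Complex.I / (lam : ℂ)) ^ x.val := by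
  rw [← Complex.exp_nat_mul, ome]
  ring_nf

lemma zeta_pow_lam (lam : ℕ) (hlam : 0 < lam) :
    Complex.exp (2 * Real.pi * Complex.I / (lam : ℂ)) ^ lam = 1 := by
  rw [← Complex.exp_nat_mul]
  have h : (lam : ℂ) ≠ 0 := Nat.cast_ne_zero.mpr hlam.ne'
  have : (lam : ℂ) * (2 * Real.pi * Complex.I / (lam : ℂ)) = 2 * Real.pi * Complex.I := by
    field_simp
  rw [this]
  simpa [mul_comm] using Complex.exp_two_pi_mul_I

lemma zeta_pow_mod (lam : ℕ) (hlam : 0 < lam) (n : ℕ) :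
    Complex.exp (2 * Real.pi * Complex.I / (lam : ℂ)) ^ n
      = Complex.exp (2 * Real.pi * Complex.I / (lam : ℂ)) ^ (n % lam) := by
  conv_lhs => rw [← Nat.mod_add_div n lam]
  rw [pow_add, pow_mul, zeta_pow_lam lam hlam, one_pow, mul_one]

lemma ome_add (lam : ℕ) (hlam : 0 < lam) (x y : ZMod lam) :
    ome lam (x + y) = ome lam x * ome lam y := by
  haveI : NeZero lam := ⟨hlam.ne'⟩
  rw [ome_eq_pow, ome_eq_pow, ome_eq_pow, ← pow_add, ZMod.val_add,
    ← zeta_pow_mod lam hlam]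

lemma ome_zero (lam : ℕ) (hlam : 0 < lam) : ome lam 0 = 1 := by
  haveI : NeZero lam := ⟨hlam.ne'⟩
  rw [ome_eq_pow, ZMod.val_zero, pow_zero]

lemma ome_ne_zero (lam : ℕ) (x : ZMod lam) : ome lam x ≠ 0 := Complex.exp_ne_zero _

lemma ome_conj (lam : ℕ) (hlam : 0 < lam) (x : ZMod lam) :
    (starRingEnd ℂ) (ome lam x) = ome lam (-x) := by
  have h1 : ome lam x * ome lam (-x) = 1 := by
    rw [← ome_add lam hlam, add_neg_cancel, ome_zero lam hlam]
  have habs : ‖ome lam x‖ = 1 := by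
    have : ome lam x = Complex.exp (((2 * Real.pi * x.val / lam : ℝ) : ℂ) * Complex.I) := by
      rw [ome]; congr 1; push_cast; ring
    rw [this, Complex.norm_exp_ofReal_mul_I]
  have h2 : ome lam x * (starRingEnd ℂ) (ome lam x) = 1 := by
    rw [Complex.mul_conj, ← Complex.sq_norm, habs]; norm_num
  exact mul_left_cancel₀ (ome_ne_zero lam x) (h2.trans h1.symm)

lemma ome_H (lam : ℕ) (hlam : 0 < lam) (hev : 2 ∣ lam) :
    ome lam ((lam / 2 : ℕ) : ZMod lam) = -1 := by
  haveI : NeZero lam := ⟨hlam.ne'⟩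
  have h2 : 2 ≤ lam := Nat.le_of_dvd hlam hev
  have hlt : lam / 2 < lam := Nat.div_lt_self hlam one_lt_two
  have hval : (((lam / 2 : ℕ) : ZMod lam)).val = lam / 2 := by
    rw [ZMod.val_natCast, Nat.mod_eq_of_lt hlt]
  rw [ome, hval]
  have hh : (lam : ℂ) = 2 * ((lam / 2 : ℕ) : ℂ) := by
    rw [← Nat.cast_ofNat, ← Nat.cast_mul, Nat.mul_div_cancel' hev]
  have hne : ((lam / 2 : ℕ) : ℂ) ≠ 0 := by
    have : 0 < lam / 2 := Nat.div_pos h2 two_pos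
    exact_mod_cast Nat.cast_ne_zero.mpr this.ne'
  have : 2 * (Real.pi : ℂ) * Complex.I * ((lam / 2 : ℕ) : ℂ) / (lam : ℂ)
      = (Real.pi : ℂ) * Complex.I := by
    have hl : (lam : ℂ) ≠ 0 := Nat.cast_ne_zero.mpr hlam.ne'
    rw [hh]; field_simp
  rw [this, Complex.exp_pi_mul_I]

lemma H_add_H (lam : ℕ) (hev : 2 ∣ lam) :
    ((lam / 2 : ℕ) : ZMod lam) + ((lam / 2 : ℕ) : ZMod lam) = 0 := by
  rw [← Nat.cast_add]
  have : lam / 2 + lam / 2 = lam := by omega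
  rw [this, ZMod.natCast_self]

lemma H_neg (lam : ℕ) (hev : 2 ∣ lam) :
    -((lam / 2 : ℕ) : ZMod lam) = ((lam / 2 : ℕ) : ZMod lam) := by
  have := H_add_H lam hev
  linear_combination -this



def flp (t x : ℕ) : ℕ := if bit x t = 1 then x - 2 ^ t else x + 2 ^ t

lemma bit_lt_two (i γ : ℕ) : bit i γ < 2 := Nat.mod_lt _ two_pos

lemma two_pow_le_of_bit (x t : ℕ) (h : bit x t = 1) : 2 ^ t ≤ x := by
  by_contra hc
  push_neg at hc
  rw [bit, Nat.div_eq_of_lt hc] at h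
  simp at h

lemma mod_lt_of_bit_zero (x t : ℕ) (h : bit x t = 0) : x % 2 ^ (t + 1) < 2 ^ t := by
  have h1 : x % 2 ^ (t + 1) / 2 ^ t = 0 := by
    rw [pow_succ, Nat.mod_mul_right_div_self]
    rw [bit] at h
    exact h
  by_contra hc
  push_neg at hc
  have := Nat.one_le_div_iff (pow_pos two_pos t) |>.mpr hc
  omega

lemma bit_add_pow (x t : ℕ) (h : bit x t = 0) (s : ℕ) :
    bit (x + 2 ^ t) s = if s = t then 1 else bit x s := by
  rcases lt_trichotomy s t with hst | hst | hst
  · rw [if_neg hst.ne]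
    have ht : (2:ℕ) ^ t = 2 ^ s * (2 ^ (t - s - 1) * 2) := by
      rw [← pow_succ, ← pow_add]
      congr 1
      omega
    rw [bit, bit, ht, Nat.add_mul_div_left _ _ (pow_pos two_pos s),
      Nat.add_mul_mod_self_right]
  · subst hst
    rw [if_pos rfl, bit, Nat.add_div_right _ (pow_pos two_pos s)]
    rw [bit] at h
    omega
  · rw [if_neg (by omega)]
    set q := x / 2 ^ (t + 1) with hq
    set r := x % 2 ^ (t + 1) with hr
    have hx : x = 2 ^ (t + 1) * q + r := (Nat.div_add_mod x (2 ^ (t + 1))).symm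
    have hrt : r < 2 ^ t := mod_lt_of_bit_zero x t h
    have key : ∀ w, w < 2 ^ (t + 1) → (2 ^ (t + 1) * q + w) / 2 ^ s = q / 2 ^ (s - t - 1) := by
      intro w hw
      have hs : (2:ℕ) ^ s = 2 ^ (t + 1) * 2 ^ (s - t - 1) := by
        rw [← pow_add]; congr 1; omega
      rw [hs, ← Nat.div_div_eq_div_mul, Nat.mul_add_div (pow_pos two_pos _),
        Nat.div_eq_of_lt hw, Nat.add_zero]
    have hp : (2:ℕ) ^ (t + 1) = 2 ^ t * 2 := pow_succ 2 t
    have hx2 : x + 2 ^ t = 2 ^ (t + 1) * q + (r + 2 ^ t) := by omega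
    rw [bit, bit, hx2, key _ (by omega), hx, key _ (by omega)]

lemma bit_sub_pow (x t : ℕ) (h : bit x t = 1) (s : ℕ) :
    bit (x - 2 ^ t) s = if s = t then 0 else bit x s := by
  have hle := two_pow_le_of_bit x t h
  obtain ⟨k, hk⟩ : ∃ k, x / 2 ^ t = k := ⟨_, rfl⟩
  have hkm : k % 2 = 1 := by rw [← hk]; exact h
  have hx : x = 2 ^ t * k + x % 2 ^ t := by rw [← hk]; exact (Nat.div_add_mod x (2 ^ t)).symm
  have hrlt : x % 2 ^ t < 2 ^ t := Nat.mod_lt _ (pow_pos two_pos _)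
  have hmul : 2 ^ t * (k - 1) + 2 ^ t = 2 ^ t * k := by
    rw [← Nat.mul_succ]
    congr 1
    omega
  have hy : x - 2 ^ t = 2 ^ t * (k - 1) + x % 2 ^ t := by
    conv_lhs => rw [hx, ← hmul]
    omega
  have h0 : bit (x - 2 ^ t) t = 0 := by
    rw [bit, hy, Nat.mul_add_div (pow_pos two_pos t), Nat.div_eq_of_lt hrlt, Nat.add_zero]
    omega
  have hadd := bit_add_pow (x - 2 ^ t) t h0 s
  rw [Nat.sub_add_cancel hle] at hadd
  by_cases hst : s = t
  · subst hst; rw [if_pos rfl, h0]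
  · rw [if_neg hst, hadd, if_neg hst]

lemma bit_flp (x t s : ℕ) : bit (flp t x) s = if s = t then 1 - bit x s else bit x s := by
  have hb := bit_lt_two x t
  rw [flp]
  by_cases h : bit x t = 1
  · rw [if_pos h, bit_sub_pow x t h s]
    by_cases hst : s = t
    · subst hst; rw [if_pos rfl, if_pos rfl, h]
    · rw [if_neg hst, if_neg hst]
  · have h0 : bit x t = 0 := by omega
    rw [if_neg h, bit_add_pow x t h0 s]
    by_cases hst : s = t
    · subst hst; rw [if_pos rfl, if_pos rfl, h0]
    · rw [if_neg hst, if_neg hst]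

lemma flp_flp (t x : ℕ) : flp t (flp t x) = x := by
  have hb := bit_lt_two x t
  rw [flp, flp]
  by_cases h : bit x t = 1
  · rw [if_pos h]
    have : bit (x - 2 ^ t) t = 0 := by rw [bit_sub_pow x t h t, if_pos rfl]
    rw [if_neg (by omega), Nat.sub_add_cancel (two_pow_le_of_bit x t h)]
  · have h0 : bit x t = 0 := by omega
    rw [if_neg h]
    have : bit (x + 2 ^ t) t = 1 := by rw [bit_add_pow x t h0 t, if_pos rfl]
    rw [if_pos this, Nat.add_sub_cancel]

lemma flp_ne (t x : ℕ) : flp t x ≠ x := by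
  intro hc
  have h := bit_flp x t t
  rw [if_pos rfl, hc] at h
  have hb := bit_lt_two x t
  omega

lemma flp_add (t x τ : ℕ) (h : bit x t = bit (x + τ) t) :
    flp t x + τ = flp t (x + τ) := by
  rw [flp, flp, ← h]
  by_cases h1 : bit x t = 1
  · rw [if_pos h1, if_pos h1]
    have := two_pow_le_of_bit x t h1
    omega
  · rw [if_neg h1, if_neg h1]
    omega

lemma flp_lt (t x mB : ℕ) (hx : x < 2 ^ mB) (ht : t < mB) : flp t x < 2 ^ mB := by
  rw [flp]
  by_cases h1 : bit x t = 1
  · rw [if_pos h1]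
    exact lt_of_le_of_lt (Nat.sub_le x _) hx
  · rw [if_neg h1]
    have h0 : bit x t = 0 := by have := bit_lt_two x t; omega
    set q := x / 2 ^ (t + 1) with hq
    set r := x % 2 ^ (t + 1) with hr
    have hx1 : x = 2 ^ (t + 1) * q + r := (Nat.div_add_mod x (2 ^ (t + 1))).symm
    have hrt : r < 2 ^ t := mod_lt_of_bit_zero x t h0
    have hql : 2 ^ (t + 1) * q ≤ x := by omega
    have hmB : (2:ℕ) ^ mB = 2 ^ (t + 1) * 2 ^ (mB - t - 1) := by
      rw [← pow_add]; congr 1; omega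
    have hq2 : q < 2 ^ (mB - t - 1) := by
      by_contra hc
      push_neg at hc
      have : 2 ^ (t + 1) * 2 ^ (mB - t - 1) ≤ 2 ^ (t + 1) * q :=
        Nat.mul_le_mul_left _ hc
      omega
    have hle : 2 ^ (t + 1) * (q + 1) ≤ 2 ^ mB := by
      rw [hmB]
      exact Nat.mul_le_mul_left _ (by omega)
    have h2 : 2 ^ (t + 1) * (q + 1) = 2 ^ (t + 1) * q + 2 ^ (t + 1) := by ring
    have hpow : (2:ℕ) ^ (t + 1) = 2 ^ t * 2 := pow_succ 2 t
    omega






lemma eq_of_bits (mB x y : ℕ) (hx : x < 2 ^ mB) (hy : y < 2 ^ mB)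
    (h : ∀ s, s < mB → bit x s = bit y s) : x = y := by
  apply Nat.eq_of_testBit_eq
  intro i
  by_cases hi : i < mB
  · have := h i hi
    rw [Nat.testBit_eq_decide_div_mod_eq, Nat.testBit_eq_decide_div_mod_eq]
    rw [bit, bit] at this
    rw [this]
  · push_neg at hi
    have h2 : (2:ℕ) ^ mB ≤ 2 ^ i := Nat.pow_le_pow_right (by norm_num) hi
    rw [Nat.testBit_lt_two_pow (by omega), Nat.testBit_lt_two_pow (by omega)]

lemma Hmu (lam : ℕ) (hev : 2 ∣ lam) (u v : ℕ) (hu : u < 2) (hv : v < 2) (huv : u ≠ v) :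
    ((lam / 2 : ℕ) : ZMod lam) * ((u : ZMod lam) - (v : ZMod lam))
      = ((lam / 2 : ℕ) : ZMod lam) := by
  have hH := H_add_H lam hev
  interval_cases u <;> interval_cases v <;> simp_all <;> linear_combination -hH

lemma eps_mul (lam : ℕ) (hev : 2 ∣ lam) (u w w' : ℕ) (hu : u < 2) (hw : w < 2)
    (hw' : w' < 2) (hww : w ≠ w') :
    (((1 - u : ℕ) : ZMod lam) - (u : ZMod lam)) *
        (((lam / 2 : ℕ) : ZMod lam) * ((w : ZMod lam) - (w' : ZMod lam)))
      = ((lam / 2 : ℕ) : ZMod lam) := by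
  have hH := H_add_H lam hev
  interval_cases u <;> interval_cases w <;> interval_cases w' <;> simp_all <;>
    linear_combination -hH

lemma ome_plus_H (lam : ℕ) (hlam : 0 < lam) (hev : 2 ∣ lam) (x : ZMod lam) :
    ome lam (x + ((lam / 2 : ℕ) : ZMod lam)) = -ome lam x := by
  rw [ome_add lam hlam, ome_H lam hlam hev, mul_neg_one]

lemma aBool_flp (lam mB : ℕ) (πB : ℕ → ℕ) (hinj : Set.InjOn πB (Set.Iio mB))
    (g : ℕ → ZMod lam) (e : ZMod lam) (βt : ℕ) (hβt : βt + 1 < mB) (x : ℕ)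
    (hmt : πB βt < mB) :
    aBool lam mB πB g e (flp (πB βt) x)
      = aBool lam mB πB g e x
        + ((bit (flp (πB βt) x) (πB βt) : ZMod lam) - (bit x (πB βt) : ZMod lam))
          * (((lam / 2 : ℕ) : ZMod lam) * ((bit x (πB (βt + 1)) : ZMod lam)
              + (if βt = 0 then 0 else (bit x (πB (βt - 1)) : ZMod lam)))
            + g (πB βt)) := by
  classical
  set t := πB βt with ht
  set F := flp t x with hF
  have hne : ∀ β, β < mB → β ≠ βt → πB β ≠ t := by
    intro β hβ hββt hc
    exact hββt (hinj hβ (by omega : βt < mB) hc)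
  have hbF : ∀ s, s ≠ t → bit F s = bit x s := by
    intro s hs
    rw [hF, bit_flp, if_neg hs]
  -- quadratic part difference
  have hdiff : (∑ β ∈ range (mB - 1), (bit F (πB β) : ZMod lam) * (bit F (πB (β + 1)) : ZMod lam))
      - (∑ β ∈ range (mB - 1), (bit x (πB β) : ZMod lam) * (bit x (πB (β + 1)) : ZMod lam))
      = ∑ β ∈ ({βt - 1, βt} : Finset ℕ),
          ((bit F (πB β) : ZMod lam) * (bit F (πB (β + 1)) : ZMod lam)
            - (bit x (πB β) : ZMod lam) * (bit x (πB (β + 1)) : ZMod lam)) := by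
    rw [← Finset.sum_sub_distrib]
    symm
    apply Finset.sum_subset
    · intro β hβ
      simp only [Finset.mem_insert, Finset.mem_singleton] at hβ
      simp only [Finset.mem_range]
      omega
    · intro β hβ hnp
      simp only [Finset.mem_insert, Finset.mem_singleton, not_or] at hnp
      simp only [Finset.mem_range] at hβ
      rw [hbF _ (hne β (by omega) (by omega)), hbF _ (hne (β + 1) (by omega) (by omega))]
      ring
  have hpair : (∑ β ∈ ({βt - 1, βt} : Finset ℕ),
          ((bit F (πB β) : ZMod lam) * (bit F (πB (β + 1)) : ZMod lam)
            - (bit x (πB β) : ZMod lam) * (bit x (πB (β + 1)) : ZMod lam)))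
      = ((bit F t : ZMod lam) - (bit x t : ZMod lam)) *
          ((bit x (πB (βt + 1)) : ZMod lam)
            + (if βt = 0 then 0 else (bit x (πB (βt - 1)) : ZMod lam))) := by
    have hnext : bit F (πB (βt + 1)) = bit x (πB (βt + 1)) :=
      hbF _ (hne (βt + 1) (by omega) (by omega))
    by_cases hβ0 : βt = 0
    · subst hβ0
      rw [if_pos rfl]
      have hset : ({0 - 1, 0} : Finset ℕ) = {0} := by decide
      rw [hset, Finset.sum_singleton]
      rw [show (0 + 1) = 1 from rfl] at *
      rw [hnext]
      ring
    · rw [if_neg hβ0]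
      have hprev : bit F (πB (βt - 1)) = bit x (πB (βt - 1)) :=
        hbF _ (hne (βt - 1) (by omega) (by omega))
      rw [Finset.sum_pair (by omega : βt - 1 ≠ βt)]
      have heq : βt - 1 + 1 = βt := by omega
      rw [heq, hprev, hnext]
      ring
  -- linear part difference
  have hlin : (∑ β ∈ range mB, g β * (bit F β : ZMod lam))
      - (∑ β ∈ range mB, g β * (bit x β : ZMod lam))
      = ((bit F t : ZMod lam) - (bit x t : ZMod lam)) * g t := by
    rw [← Finset.sum_sub_distrib]
    rw [Finset.sum_eq_single t]
    · ring
    · intro β hβ hβt'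
      rw [hbF β hβt']
      ring
    · intro hc
      exact absurd (Finset.mem_range.mpr hmt) hc
  rw [aBool, aBool]
  linear_combination ((lam / 2 : ℕ) : ZMod lam) * (hdiff.trans hpair) + hlin

lemma gcp (lam : ℕ) (hlam : 0 < lam) (hev : 2 ∣ lam) (mB : ℕ) (hmB : 1 ≤ mB)
    (πB : ℕ → ℕ) (hπB : Set.BijOn πB (Set.Iio mB) (Set.Iio mB))
    (g : ℕ → ZMod lam) (e e' : ZMod lam) (τ : ℕ) (hτ0 : 0 < τ) (hτM : τ < 2 ^ mB) :
    ∑ i ∈ range (2 ^ mB - τ),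
      (ome lam (aBool lam mB πB g e i - aBool lam mB πB g e (i + τ))
        + ome lam (bBool lam mB πB g e' i - bBool lam mB πB g e' (i + τ))) = 0 := by
  classical
  have hinj : Set.InjOn πB (Set.Iio mB) := hπB.injOn
  have hmt : ∀ β, β < mB → πB β < mB := fun β hβ => hπB.mapsTo hβ
  set H : ZMod lam := ((lam / 2 : ℕ) : ZMod lam) with hH
  -- b-difference in terms of a-difference
  have hbdiff : ∀ x y : ℕ, bBool lam mB πB g e' x - bBool lam mB πB g e' y
      = (aBool lam mB πB g e x - aBool lam mB πB g e y)
        + H * ((bit x (πB 0) : ZMod lam) - (bit y (πB 0) : ZMod lam)) := by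
    intro x y
    rw [bBool, bBool, aBool, aBool, aBool, aBool]
    ring
  -- the finding function
  have hPex : ∀ a : ℕ, ∃ β, bit a (πB β) ≠ bit (a + τ) (πB β) ∨ mB ≤ β :=
    fun a => ⟨mB, Or.inr le_rfl⟩
  set bf : ℕ → ℕ := fun a => Nat.find (hPex a) with hbf
  -- facts about bf on the relevant set
  have hbffact : ∀ a, a < 2 ^ mB - τ → bit a (πB 0) = bit (a + τ) (πB 0) →
      1 ≤ bf a ∧ bf a < mB ∧ bit a (πB (bf a)) ≠ bit (a + τ) (πB (bf a))
        ∧ ∀ β, β < bf a → bit a (πB β) = bit (a + τ) (πB β) := by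
    intro a ha h0
    have haM : a < 2 ^ mB := by omega
    have haM' : a + τ < 2 ^ mB := by omega
    have hex : ∃ s, s < mB ∧ bit a s ≠ bit (a + τ) s := by
      by_contra hc
      push_neg at hc
      have : a = a + τ := eq_of_bits mB a (a + τ) haM haM' (fun s hs => hc s hs)
      omega
    obtain ⟨s, hs, hsne⟩ := hex
    obtain ⟨β, hβ, hβs⟩ := hπB.surjOn hs
    have hβlt : β < mB := hβ
    have hPβ : bit a (πB β) ≠ bit (a + τ) (πB β) ∨ mB ≤ β := Or.inl (by rw [hβs]; exact hsne)
    have hle : bf a ≤ β := Nat.find_min' (hPex a) hPβ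
    have hbfm : bf a < mB := by omega
    have hspec := Nat.find_spec (hPex a)
    have hne : bit a (πB (bf a)) ≠ bit (a + τ) (πB (bf a)) := by
      rcases hspec with h | h
      · exact h
      · exact absurd (show mB ≤ bf a from h) (by omega)
    have hmin : ∀ β', β' < bf a → bit a (πB β') = bit (a + τ) (πB β') := by
      intro β' hβ'
      have := Nat.find_min (hPex a) hβ'
      push_neg at this
      exact this.1
    have h1 : 1 ≤ bf a := by
      rcases Nat.eq_zero_or_pos (bf a) with h | h
      · exfalso; rw [h] at hne; exact hne h0
      · exact h
    exact ⟨h1, hbfm, hne, hmin⟩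
  -- split the sum
  rw [← Finset.sum_filter_add_sum_filter_not (range (2 ^ mB - τ))
    (fun i => bit i (πB 0) ≠ bit (i + τ) (πB 0))]
  have hC1 : ∑ i ∈ (range (2 ^ mB - τ)).filter
      (fun i => bit i (πB 0) ≠ bit (i + τ) (πB 0)),
      (ome lam (aBool lam mB πB g e i - aBool lam mB πB g e (i + τ))
        + ome lam (bBool lam mB πB g e' i - bBool lam mB πB g e' (i + τ))) = 0 := by
    apply Finset.sum_eq_zero
    intro i hi
    rw [Finset.mem_filter] at hi
    have hne := hi.2
    rw [hbdiff i (i + τ),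
      Hmu lam hev _ _ (bit_lt_two _ _) (bit_lt_two _ _) hne, ome_plus_H lam hlam hev]
    ring
  rw [hC1, zero_add]
  -- involution on the rest
  set T := (range (2 ^ mB - τ)).filter
      (fun i => ¬bit i (πB 0) ≠ bit (i + τ) (πB 0)) with hT
  have memT : ∀ a, a ∈ T ↔ a < 2 ^ mB - τ ∧ bit a (πB 0) = bit (a + τ) (πB 0) := by
    intro a
    rw [hT, Finset.mem_filter, Finset.mem_range]
    push_neg
    tauto
  have master : ∀ a ∈ T,
      flp (πB (bf a - 1)) a ∈ T
      ∧ bf (flp (πB (bf a - 1)) a) = bf a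
      ∧ (aBool lam mB πB g e (flp (πB (bf a - 1)) a)
          - aBool lam mB πB g e (flp (πB (bf a - 1)) a + τ)
        = (aBool lam mB πB g e a - aBool lam mB πB g e (a + τ)) + H) := by
    intro a haT
    obtain ⟨ha1, ha2⟩ := (memT a).mp haT
    obtain ⟨h1, h2, h3, h4⟩ := hbffact a ha1 ha2
    set t := πB (bf a - 1) with htdef
    have ht : t < mB := hmt _ (by omega)
    have hbt : bit a t = bit (a + τ) t := h4 (bf a - 1) (by omega)
    have hshift : flp t a + τ = flp t (a + τ) := flp_add t a τ hbt
    have haM' : a + τ < 2 ^ mB := by omega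
    have hσlt : flp t a < 2 ^ mB - τ := by
      have := flp_lt t (a + τ) mB haM' ht
      omega
    have hbitσ : ∀ s, bit (flp t a + τ) s = if s = t then 1 - bit (a + τ) s else bit (a + τ) s := by
      intro s
      rw [hshift, bit_flp]
    have hdiffiff : ∀ s, (bit (flp t a) s ≠ bit (flp t a + τ) s) ↔ (bit a s ≠ bit (a + τ) s) := by
      intro s
      rw [hbitσ s, bit_flp]
      by_cases hst : s = t
      · rw [if_pos hst, if_pos hst]
        have b1 := bit_lt_two a s
        have b2 := bit_lt_two (a + τ) s
        omega
      · rw [if_neg hst, if_neg hst]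
    have hC1σ : bit (flp t a) (πB 0) = bit (flp t a + τ) (πB 0) := by
      have := hdiffiff (πB 0)
      by_contra hc
      exact ((this.mp hc) ha2)
    have hσT : flp t a ∈ T := (memT _).mpr ⟨hσlt, hC1σ⟩
    have hbfσ : bf (flp t a) = bf a := by
      apply le_antisymm
      · apply Nat.find_min' (hPex (flp t a))
        exact Or.inl ((hdiffiff (πB (bf a))).mpr h3)
      · apply Nat.find_min' (hPex a)
        rcases Nat.find_spec (hPex (flp t a)) with h | h
        · exact Or.inl ((hdiffiff _).mp h)
        · exact Or.inr h
    refine ⟨hσT, hbfσ, ?_⟩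
    -- the aBool difference computation
    have hsucc : bf a - 1 + 1 = bf a := by omega
    have hA1 := aBool_flp lam mB πB hinj g e (bf a - 1) (by omega) a (hmt _ (by omega))
    have hA2 := aBool_flp lam mB πB hinj g e (bf a - 1) (by omega) (a + τ) (hmt _ (by omega))
    rw [hsucc] at hA1 hA2
    rw [← hshift] at hA2
    have hεa : bit (flp t a) t = 1 - bit a t := by rw [bit_flp, if_pos rfl]
    have hε' : bit (flp t a + τ) t = 1 - bit (a + τ) t := by rw [hbitσ, if_pos rfl]
    have hpre : (if bf a - 1 = 0 then (0 : ZMod lam)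
          else ((bit (a + τ) (πB (bf a - 1 - 1)) : ZMod lam)))
        = (if bf a - 1 = 0 then (0 : ZMod lam)
          else ((bit a (πB (bf a - 1 - 1)) : ZMod lam))) := by
      by_cases hb0 : bf a - 1 = 0
      · rw [if_pos hb0, if_pos hb0]
      · rw [if_neg hb0, if_neg hb0, h4 (bf a - 1 - 1) (by omega)]
    rw [hεa] at hA1
    rw [hε', ← hbt, hpre] at hA2
    rw [hA1, hA2]
    have hepsm := eps_mul lam hev (bit a t) (bit a (πB (bf a))) (bit (a + τ) (πB (bf a)))
      (bit_lt_two _ _) (bit_lt_two _ _) (bit_lt_two _ _) h3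
    rw [hH]
    linear_combination hepsm
  -- now apply the involution
  have hΔb : ∀ a ∈ T, bBool lam mB πB g e' a - bBool lam mB πB g e' (a + τ)
      = aBool lam mB πB g e a - aBool lam mB πB g e (a + τ) := by
    intro a haT
    obtain ⟨ha1, ha2⟩ := (memT a).mp haT
    rw [hbdiff, ha2, sub_self, mul_zero, add_zero]
  apply Finset.sum_involution (fun a ha => flp (πB (bf a - 1)) a)
  · intro a ha
    obtain ⟨hσT, hbfσ, hΔ⟩ := master a ha
    rw [hΔb a ha, hΔb _ hσT]
    have hστ : flp (πB (bf a - 1)) a + τ = flp (πB (bf a - 1)) (a + τ) := by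
      obtain ⟨ha1, ha2⟩ := (memT a).mp ha
      obtain ⟨h1, h2, h3, h4⟩ := hbffact a ha1 ha2
      exact flp_add _ a τ (h4 (bf a - 1) (by omega))
    rw [hΔ, ome_plus_H lam hlam hev]
    ring
  · intro a ha _
    exact flp_ne _ _
  · intro a ha
    exact (master a ha).1
  · intro a ha
    obtain ⟨hσT, hbfσ, hΔ⟩ := master a ha
    rw [hbfσ]
    exact flp_flp _ _

/-- column-direction Golay complementarity: for each fixed `γ` and each
`0 < τ1 < 2^{mB}`, the 2-D autocorrelation of the single array `X^γ` at shift
`(τ1, 0)` vanishes. -/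
theorem single_array_golay (k : ℕ) (p m : Fin k → ℕ) (hp : ∀ α, (p α).Prime)
    (hm : ∀ α, 2 ≤ m α) (lam : ℕ) (hlam : 0 < lam) (heven : 2 ∣ lam)
    (hdvd : ∀ α, p α ∣ lam)
    (π : Fin k → ℕ → ℕ)
    (hπ : ∀ α, Set.BijOn (π α) (Set.Iio (m α - 1)) (Set.Iio (m α - 1)))
    (c : Fin k → ℕ → ZMod lam) (c' : Fin k → ZMod lam)
    (mB : ℕ) (hmB : 1 ≤ mB) (πB : ℕ → ℕ)
    (hπB : Set.BijOn πB (Set.Iio mB) (Set.Iio mB))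
    (g : ℕ → ZMod lam) (e e' : ZMod lam)
    (s1 s2 t1 t2 γ : ∀ α, Fin (p α)) (ht : t1 ≠ t2)
    (τ1 : ℤ) (hτ1 : 0 < τ1) (hτ2 : τ1 < ((2 ^ mB : ℕ) : ℤ)) :
    accf2 (2 ^ mB) (2 * ∏ α, p α ^ (m α))
        (XArr p m lam π c c' mB πB g e e' s1 s2 t1 t2 γ)
        (XArr p m lam π c c' mB πB g e e' s1 s2 t1 t2 γ) τ1 0 = 0 := by
  classical
  set N := ∏ α, p α ^ (m α) with hNdef
  have hN : 0 < N := Finset.prod_pos (fun α _ => pow_pos (hp α).pos _)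
  obtain ⟨τ, rfl⟩ : ∃ τ : ℕ, τ1 = (τ : ℤ) := ⟨τ1.toNat, (Int.toNat_of_nonneg hτ1.le).symm⟩
  have hτ0 : 0 < τ := by exact_mod_cast hτ1
  have hτM : τ < 2 ^ mB := by exact_mod_cast hτ2
  have hXome : ∀ i j, XArr p m lam π c c' mB πB g e e' s1 s2 t1 t2 γ i j
      = ome lam (FFun p m lam π c c' mB πB g e e' s1 s2 t1 t2 γ i j) := fun _ _ => rfl
  have hF1 : ∀ i j, j < N → FFun p m lam π c c' mB πB g e e' s1 s2 t1 t2 γ i j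
      = aFun p m lam π c c' s1 t1 γ j + aBool lam mB πB g e i := by
    intro i j hj
    rw [FFun, Nat.div_eq_of_lt hj, Nat.mod_eq_of_lt hj]
    push_cast
    ring
  have hF2 : ∀ i j, j < N → FFun p m lam π c c' mB πB g e e' s1 s2 t1 t2 γ i (N + j)
      = aFun p m lam π c c' s2 t2 γ j + bBool lam mB πB g e' i := by
    intro i j hj
    rw [FFun]
    have hdiv : (N + j) / N = 1 := by
      rw [Nat.add_comm, Nat.add_div_right _ hN, Nat.div_eq_of_lt hj]
    have hmod : (N + j) % N = j := by
      rw [Nat.add_mod_left, Nat.mod_eq_of_lt hj]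
    rw [hdiv, hmod]
    push_cast
    ring
  have hprod : ∀ P A A' : ZMod lam,
      ome lam (P + A) * (starRingEnd ℂ) (ome lam (P + A')) = ome lam (A - A') := by
    intro P A A'
    rw [ome_conj lam hlam, ← ome_add lam hlam]
    congr 1
    ring
  rw [accf2, if_pos (by positivity : (0:ℤ) ≤ (τ:ℤ)), if_pos le_rfl]
  simp only [Int.toNat_zero, Int.toNat_natCast, Nat.sub_zero, Nat.add_zero]
  have hinner : ∀ i ∈ range (2 ^ mB - τ),
      (∑ j ∈ range (2 * N),
        XArr p m lam π c c' mB πB g e e' s1 s2 t1 t2 γ i j *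
          (starRingEnd ℂ) (XArr p m lam π c c' mB πB g e e' s1 s2 t1 t2 γ (i + τ) j))
      = N • (ome lam (aBool lam mB πB g e i - aBool lam mB πB g e (i + τ))
          + ome lam (bBool lam mB πB g e' i - bBool lam mB πB g e' (i + τ))) := by
    intro i _
    rw [two_mul, Finset.sum_range_add]
    have hh1 : ∑ j ∈ range N,
        XArr p m lam π c c' mB πB g e e' s1 s2 t1 t2 γ i j *
          (starRingEnd ℂ) (XArr p m lam π c c' mB πB g e e' s1 s2 t1 t2 γ (i + τ) j)
        = N • ome lam (aBool lam mB πB g e i - aBool lam mB πB g e (i + τ)) := by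
      rw [Finset.sum_congr rfl (fun j hj => ?_), Finset.sum_const, Finset.card_range]
      rw [Finset.mem_range] at hj
      rw [hXome, hXome, hF1 i j hj, hF1 (i + τ) j hj, hprod]
    have hh2 : ∑ j ∈ range N,
        XArr p m lam π c c' mB πB g e e' s1 s2 t1 t2 γ i (N + j) *
          (starRingEnd ℂ) (XArr p m lam π c c' mB πB g e e' s1 s2 t1 t2 γ (i + τ) (N + j))
        = N • ome lam (bBool lam mB πB g e' i - bBool lam mB πB g e' (i + τ)) := by
      rw [Finset.sum_congr rfl (fun j hj => ?_), Finset.sum_const, Finset.card_range]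
      rw [Finset.mem_range] at hj
      rw [hXome, hXome, hF2 i j hj, hF2 (i + τ) j hj, hprod]
    rw [hh1, hh2, smul_add]
  rw [Finset.sum_congr rfl hinner, ← Finset.smul_sum,
    gcp lam hlam heven mB hmB πB hπB g e e' τ hτ0 hτM, smul_zero]
end
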